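/- arXiv:1405.2464 — 3 statements merged into one kernel-verified Lean document; each statement's English description precedes it below -/
import Mathlib

section
/- If a quartet tree q = ij|kh distinguishes an interior edge e of a binary tree T, with i,j,k,h lying in the four partition classes A_i, A_j, A_k, A_h induced by e, then for any leaf x not in the support of q, the quartet tree substitution q(x), obtained by replacing with x the unique element of supp(q) lying in the same partition class as x, also distinguishes the edge e. -/
open SimpleGraph Finset

/-- An unrooted binary tree: a tree in which every vertex has degree 1 or 3. -/
def IsBinaryTree {V : Type} [Fintype V] [DecidableEq V]
    (G : SimpleGraph V) [DecidableRel G.Adj] : Prop :=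
  G.IsTree ∧ ∀ v, G.degree v = 1 ∨ G.degree v = 3

/-- A leaf is a vertex of degree one. -/
def IsLeaf {V : Type} [Fintype V] [DecidableEq V]
    (G : SimpleGraph V) [DecidableRel G.Adj] (v : V) : Prop := G.degree v = 1

/-- An interior edge is an edge both of whose endpoints have degree 3. -/
def InteriorEdge {V : Type} [Fintype V] [DecidableEq V]
    (G : SimpleGraph V) [DecidableRel G.Adj] (e : Sym2 V) : Prop :=
  e ∈ G.edgeSet ∧ ∀ v ∈ e, G.degree v = 3

/-- The edge `e` separates `a,b` from `c,d`: after deleting `e`, `a` and `b` lie in one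
connected component and `c` and `d` lie in the other. -/
def Separates {V : Type} (G : SimpleGraph V) (e : Sym2 V) (a b c d : V) : Prop :=
  e ∈ G.edgeSet ∧ (G.deleteEdges {e}).Reachable a b ∧
    (G.deleteEdges {e}).Reachable c d ∧ ¬ (G.deleteEdges {e}).Reachable a c

/-- The quartet tree `ab|cd` distinguishes `e` if `e` is the unique edge separating
`{a,b}` from `{c,d}`. -/
def Distinguishes {V : Type} (G : SimpleGraph V) (e : Sym2 V) (a b c d : V) : Prop :=
  Separates G e a b c d ∧ ∀ e', Separates G e' a b c d → e' = e

/-- `x` and `y` lie in the same class of the four-way partition induced by the interior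
edge with endpoints `u`, `v`: they are connected after removing all edges incident
to `u` or `v`. -/
def SameClass {V : Type} (G : SimpleGraph V) (u v x y : V) : Prop :=
  (G.deleteEdges (G.incidenceSet u ∪ G.incidenceSet v)).Reachable x y

/-- A quartet tree `ab|cd`, recorded as the ordered data of its two pairs `{a,b}`, `{c,d}`. -/
structure Q4 (V : Type) where
  a : V
  b : V
  c : V
  d : V

/-- The support of a quartet tree. -/
def Q4.supp {V : Type} [DecidableEq V] (q : Q4 V) : Finset V := {q.a, q.b, q.c, q.d}

/-- The quartet tree as an unordered pair of unordered pairs (its topology `ab|cd`). -/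
def Q4.toSym {V : Type} (q : Q4 V) : Sym2 (Sym2 V) := s(s(q.a, q.b), s(q.c, q.d))

open Classical in
/-- Quartet tree substitution: replace by `x` the element of the support of `q`
lying in the same class as `x` of the four-way partition induced by the edge `s(u,v)`. -/
noncomputable def subst {V : Type} (G : SimpleGraph V) (u v : V) (q : Q4 V) (x : V) : Q4 V :=
  if SameClass G u v x q.a then ⟨x, q.b, q.c, q.d⟩
  else if SameClass G u v x q.b then ⟨q.a, x, q.c, q.d⟩
  else if SameClass G u v x q.c then ⟨q.a, q.b, x, q.d⟩
  else ⟨q.a, q.b, q.c, x⟩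

/-!
Deleting an edge `f` of a tree leaves exactly two components. If `e = uv` distinguishes `ij|kh`
and some other edge `e'` separated `xj` from `kh` without separating `ij` from `kh`, then `i`
would lie on the side of `k`; the walk from `i` to `k` avoiding `e'` has to cross `e`, so `x` is
cut off from `u` and `v`, and its walk to `j` avoiding `e'` puts `x`, hence `i`, in the class of
`j`. But two members of a quartet distinguishing `e` never share a class: if `i` and `j` hung off
`u` through the edge `uc`, then `uc` would separate `ij|kh` as well.
-/

namespace SimpleGraph

variable {V : Type*} {G : SimpleGraph V} {s t : Set (Sym2 V)} {a b u v : V}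

theorem Walk.reachable_deleteEdges_of_forall_exists_notMem_support
    (p : (G.deleteEdges s).Walk a b) (ht : ∀ f ∈ t, ∃ w ∈ f, w ∉ p.support) :
    (G.deleteEdges t).Reachable a b := by
  refine ⟨p.transfer _ fun f hf => ?_⟩
  have hfG := p.edges_subset_edgeSet hf
  rw [edgeSet_deleteEdges] at hfG ⊢
  refine ⟨hfG.1, fun hft => ?_⟩
  obtain ⟨w, hwf, hw⟩ := ht f hft
  exact hw (p.mem_support_of_mem_edges hf hwf)

theorem Reachable.deleteEdges_of_forall_exists_not_reachable
    (hab : (G.deleteEdges s).Reachable a b)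
    (ht : ∀ f ∈ t, ∃ w ∈ f, ¬ (G.deleteEdges s).Reachable a w) :
    (G.deleteEdges t).Reachable a b := by
  obtain ⟨p⟩ := hab
  refine p.reachable_deleteEdges_of_forall_exists_notMem_support fun f hf => ?_
  obtain ⟨w, hwf, hw⟩ := ht f hf
  refine ⟨w, hwf, fun hwp => hw ?_⟩
  obtain ⟨q, -, -⟩ := Walk.mem_support_iff_exists_append.mp hwp
  exact q.reachable

theorem Reachable.reachable_of_mem_of_not_reachable_deleteEdges {e : Sym2 V} {w : V}
    (hab : (G.deleteEdges s).Reachable a b) (hab' : ¬ (G.deleteEdges {e}).Reachable a b)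
    (hw : w ∈ e) : (G.deleteEdges s).Reachable a w := by
  by_contra haw
  refine hab' (hab.deleteEdges_of_forall_exists_not_reachable fun f hf => ⟨w, ?_, haw⟩)
  rwa [Set.mem_singleton_iff.mp hf]

theorem eq_of_reachable_deleteEdges_of_incidenceSet_subset (hs : G.incidenceSet a ⊆ s)
    (h : (G.deleteEdges s).Reachable a b) : b = a := by
  obtain ⟨p⟩ := h
  cases p with
  | nil => rfl
  | cons hadj _ =>
    obtain ⟨hadj, hns⟩ := deleteEdges_adj.mp hadj
    exact absurd (hs ⟨G.mem_edgeSet.mpr hadj, Sym2.mem_mk_left _ _⟩) hns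

theorem Walk.reachable_deleteEdges_or {w : V} (p : G.Walk a w)
    (hw : (G.deleteEdges {s(u, v)}).Reachable w u ∨ (G.deleteEdges {s(u, v)}).Reachable w v) :
    (G.deleteEdges {s(u, v)}).Reachable a u ∨ (G.deleteEdges {s(u, v)}).Reachable a v := by
  induction p with
  | nil => exact hw
  | @cons a c w hadj p ih =>
    by_cases hac : s(a, c) = s(u, v)
    · rcases Sym2.eq_iff.mp hac with ⟨rfl, -⟩ | ⟨rfl, -⟩
      exacts [Or.inl .rfl, Or.inr .rfl]
    · have hadj' : (G.deleteEdges {s(u, v)}).Adj a c := deleteEdges_adj.mpr ⟨hadj, hac⟩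
      exact (ih hw).imp hadj'.reachable.trans hadj'.reachable.trans

theorem Preconnected.reachable_deleteEdges_or (hG : G.Preconnected) (u v a : V) :
    (G.deleteEdges {s(u, v)}).Reachable a u ∨ (G.deleteEdges {s(u, v)}).Reachable a v :=
  (hG a u).some.reachable_deleteEdges_or (Or.inl .rfl)

theorem Preconnected.reachable_deleteEdges_or_of_not_reachable (hG : G.Preconnected)
    {e : Sym2 V} (hab : ¬ (G.deleteEdges {e}).Reachable a b) (z : V) :
    (G.deleteEdges {e}).Reachable z a ∨ (G.deleteEdges {e}).Reachable z b := by
  induction e using Sym2.ind with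
  | _ u v =>
    rcases hG.reachable_deleteEdges_or u v a with ha | ha <;>
      rcases hG.reachable_deleteEdges_or u v b with hb | hb <;>
      rcases hG.reachable_deleteEdges_or u v z with hz | hz <;>
      first
        | exact absurd (ha.trans hb.symm) hab
        | exact Or.inl (hz.trans ha.symm)
        | exact Or.inr (hz.trans hb.symm)

end SimpleGraph

section Quartet

variable {V : Type} {G : SimpleGraph V} {e : Sym2 V} {a b c d u v i j k h x : V}

theorem Separates.swap_left (hs : Separates G e a b c d) : Separates G e b a c d :=
  ⟨hs.1, hs.2.1.symm, hs.2.2.1, fun hbc => hs.2.2.2 (hs.2.1.trans hbc)⟩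

theorem Separates.swap_pairs (hs : Separates G e a b c d) : Separates G e c d a b :=
  ⟨hs.1, hs.2.2.1, hs.2.1, fun hca => hs.2.2.2 hca.symm⟩

theorem Distinguishes.swap_left (hd : Distinguishes G e a b c d) : Distinguishes G e b a c d :=
  ⟨hd.1.swap_left, fun _ hs => hd.2 _ hs.swap_left⟩

theorem Distinguishes.swap_pairs (hd : Distinguishes G e a b c d) : Distinguishes G e c d a b :=
  ⟨hd.1.swap_pairs, fun _ hs => hd.2 _ hs.swap_pairs⟩

theorem sameClass_comm_edge : SameClass G u v a b ↔ SameClass G v u a b := by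
  rw [SameClass, SameClass, Set.union_comm]

theorem SameClass.reachable_deleteEdges (hab : SameClass G u v a b) (huv : s(u, v) ∈ G.edgeSet) :
    (G.deleteEdges {s(u, v)}).Reachable a b :=
  hab.mono <| deleteEdges_anti <| Set.singleton_subset_iff.mpr <|
    Or.inl ⟨huv, Sym2.mem_mk_left u v⟩

theorem SameClass.eq_left (hab : SameClass G u v a u) : a = u :=
  eq_of_reachable_deleteEdges_of_incidenceSet_subset Set.subset_union_left hab.symm

theorem SimpleGraph.IsTree.not_sameClass_of_reachable_left (hG : G.IsTree)
    (hd : Distinguishes G s(u, v) i j k h) (hiu : (G.deleteEdges {s(u, v)}).Reachable i u)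
    (hne : i ≠ u) : ¬ SameClass G u v i j := by
  intro hij
  obtain ⟨⟨-, -, hkh, hik⟩, huniq⟩ := hd
  obtain ⟨p, hp⟩ := hiu.symm.exists_isPath
  cases p with
  | nil => exact hne rfl
  | @cons _ c _ hadj q =>
    obtain ⟨hadj, hcv⟩ := deleteEdges_adj.mp hadj
    have huc : s(u, c) ∈ G.edgeSet := G.mem_edgeSet.mpr hadj
    have hsep : Separates G s(u, c) i j k h := by
      refine ⟨huc, hij.mono (deleteEdges_anti ?_), ?_, fun hik' => ?_⟩
      · exact Set.singleton_subset_iff.mpr (Or.inl ⟨huc, Sym2.mem_mk_left u c⟩)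
      · refine hkh.deleteEdges_of_forall_exists_not_reachable fun f hf => ⟨u, ?_, ?_⟩
        · rw [Set.mem_singleton_iff.mp hf]
          exact Sym2.mem_mk_left u c
        · exact fun hku => hik (hiu.trans hku.symm)
      · -- `i` reaches `u` across `e` and `c` along the rest of the path, so `s(u, c)` is no bridge
        have hiu' := hik'.reachable_of_mem_of_not_reachable_deleteEdges hik (Sym2.mem_mk_left u v)
        have hci : (G.deleteEdges {s(u, c)}).Reachable c i := by
          refine q.reachable_deleteEdges_of_forall_exists_notMem_support fun f hf => ⟨u, ?_, ?_⟩
          · rw [Set.mem_singleton_iff.mp hf]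
            exact Sym2.mem_mk_left u c
          · exact ((Walk.cons_isPath_iff _ _).mp hp).2
        exact isBridge_iff.mp (isAcyclic_iff_forall_isBridge.mp hG.isAcyclic huc)
          (hci.trans hiu').symm
    exact hcv (huniq _ hsep)

theorem SimpleGraph.IsTree.not_sameClass (hG : G.IsTree) (hd : Distinguishes G s(u, v) i j k h)
    (hiu : i ≠ u) (hiv : i ≠ v) : ¬ SameClass G u v i j := by
  rcases hG.connected.preconnected.reachable_deleteEdges_or u v i with hiu' | hiv'
  · exact hG.not_sameClass_of_reachable_left hd hiu' hiu
  · rw [sameClass_comm_edge]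
    rw [Sym2.eq_swap] at hd hiv'
    exact hG.not_sameClass_of_reachable_left hd hiv' hiv

theorem SimpleGraph.IsTree.distinguishes_of_sameClass (hG : G.IsTree)
    (hd : Distinguishes G s(u, v) i j k h) (hxi : SameClass G u v x i) :
    Distinguishes G s(u, v) x j k h := by
  by_cases hi : i = u ∨ i = v
  · obtain rfl : x = i := by
      rcases hi with rfl | rfl
      · exact hxi.eq_left
      · exact (sameClass_comm_edge.mp hxi).eq_left
    exact hd
  obtain ⟨hiu, hiv⟩ := not_or.mp hi
  have ⟨⟨he, hij, hkh, hik⟩, huniq⟩ := hd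
  have hxi' := hxi.reachable_deleteEdges he
  refine ⟨⟨he, hxi'.trans hij, hkh, fun hxk => hik (hxi'.symm.trans hxk)⟩, ?_⟩
  rintro e' ⟨he', hxj', hkh', hxk'⟩
  rcases hG.connected.preconnected.reachable_deleteEdges_or_of_not_reachable hxk' i
    with hix' | hik'
  · exact huniq e' ⟨he', hix'.trans hxj', hkh', fun hik' => hxk' (hix'.symm.trans hik')⟩
  have hxuv : ∀ w ∈ s(u, v), ¬ (G.deleteEdges {e'}).Reachable x w := fun w hw hxw =>
    hxk' (hxw.trans ((hik'.reachable_of_mem_of_not_reachable_deleteEdges hik hw).symm.trans hik'))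
  have hxj : SameClass G u v x j := by
    refine hxj'.deleteEdges_of_forall_exists_not_reachable ?_
    rintro f (⟨-, hf⟩ | ⟨-, hf⟩)
    exacts [⟨u, hf, hxuv u (Sym2.mem_mk_left u v)⟩, ⟨v, hf, hxuv v (Sym2.mem_mk_right u v)⟩]
  exact (hG.not_sameClass hd hiu hiv (hxi.symm.trans hxj)).elim

end Quartet

theorem stmt_7_general {V : Type} [Fintype V] [DecidableEq V] (G : SimpleGraph V) [DecidableRel G.Adj]
    (hG : IsBinaryTree G) (u v i j k h x : V)
    (hd : Distinguishes G s(u, v) i j k h) :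
    (SameClass G u v x i → Distinguishes G s(u, v) x j k h) ∧
    (SameClass G u v x j → Distinguishes G s(u, v) i x k h) ∧
    (SameClass G u v x k → Distinguishes G s(u, v) i j x h) ∧
    (SameClass G u v x h → Distinguishes G s(u, v) i j k x) :=
  ⟨hG.1.distinguishes_of_sameClass hd,
    fun hxj => (hG.1.distinguishes_of_sameClass hd.swap_left hxj).swap_left,
    fun hxk => (hG.1.distinguishes_of_sameClass hd.swap_pairs hxk).swap_pairs,
    fun hxh => (hG.1.distinguishes_of_sameClass hd.swap_pairs.swap_left hxh).swap_left.swap_pairs⟩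

/-- If `q = ij|kh` distinguishes the interior edge `e = s(u,v)` and `x` is a leaf outside
`supp(q)`, then the quartet tree substitution `q(x)`, obtained by replacing with `x` the
element of `supp(q)` lying in the same partition class as `x`, also distinguishes `e`. -/
theorem stmt_7 {V : Type} [Fintype V] [DecidableEq V] (G : SimpleGraph V) [DecidableRel G.Adj]
    (hG : IsBinaryTree G) (u v i j k h x : V)
    (he : InteriorEdge G s(u, v)) (hd : Distinguishes G s(u, v) i j k h)
    (hli : G.degree i = 1) (hlj : G.degree j = 1) (hlk : G.degree k = 1) (hlh : G.degree h = 1)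
    (hlx : G.degree x = 1) (hx : x ∉ ({i, j, k, h} : Finset V)) :
    (SameClass G u v x i → Distinguishes G s(u, v) x j k h) ∧
    (SameClass G u v x j → Distinguishes G s(u, v) i x k h) ∧
    (SameClass G u v x k → Distinguishes G s(u, v) i j x h) ∧
    (SameClass G u v x h → Distinguishes G s(u, v) i j k x) :=
  stmt_7_general G hG u v i j k h x hd
end

section
/- Distinct quartet trees in a vine have distinct supports: if q distinguishes edge e and x ≠ y are leaves outside supp(q), then q(x) ≠ q(y), and hence the vine v(q) = {q} ∪ {q(x) : x ∈ X − supp(q)} has cardinality n - 3. -/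
open SimpleGraph Finset

lemma toSym_supp_eq {V : Type} [DecidableEq V] {q r : Q4 V}
    (h : q.toSym = r.toSym) : q.supp = r.supp := by
  simp only [Q4.toSym, Sym2.eq_iff] at h
  rcases h with ⟨h1, h2⟩ | ⟨h1, h2⟩ <;>
    rcases h1 with ⟨e1, e2⟩ | ⟨e1, e2⟩ <;>
    rcases h2 with ⟨e3, e4⟩ | ⟨e3, e4⟩ <;>
    · ext z; simp only [Q4.supp, Finset.mem_insert, Finset.mem_singleton, e1, e2, e3, e4]; try tauto

lemma subst_mem {V : Type} [DecidableEq V] (G : SimpleGraph V) (u v : V) (q : Q4 V) (x : V) :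
    x ∈ (subst G u v q x).supp := by
  unfold subst
  split_ifs <;> simp [Q4.supp]

lemma subst_subset {V : Type} [DecidableEq V] (G : SimpleGraph V) (u v : V) (q : Q4 V) (x : V) :
    (subst G u v q x).supp ⊆ insert x q.supp := by
  unfold subst
  split_ifs <;> intro z hz <;> simp [Q4.supp] at hz ⊢ <;> tauto

lemma subst_ne {V : Type} [DecidableEq V] (G : SimpleGraph V) (u v : V) (q : Q4 V) {x y : V}
    (hxs : x ∉ q.supp) (hxy : x ≠ y) :
    (subst G u v q x).toSym ≠ (subst G u v q y).toSym := by
  intro h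
  have hs := toSym_supp_eq h
  have hx : x ∈ (subst G u v q y).supp := hs ▸ subst_mem G u v q x
  have := subst_subset G u v q y hx
  rcases Finset.mem_insert.mp this with rfl | h'
  · exact hxy rfl
  · exact hxs h'

lemma subst_ne_self {V : Type} [DecidableEq V] (G : SimpleGraph V) (u v : V) (q : Q4 V) {x : V}
    (hxs : x ∉ q.supp) : q.toSym ≠ (subst G u v q x).toSym := by
  intro h
  have hs := toSym_supp_eq h
  exact hxs (hs ▸ subst_mem G u v q x)

/-- Distinct quartet trees in a vine have distinct supports: if `q` distinguishes the
interior edge `s(u,v)` and `x ≠ y` are leaves outside `supp(q)`, then `q(x) ≠ q(y)`;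
hence the vine `v(q) = {q} ∪ {q(x) : x ∈ X − supp(q)}` has cardinality `n - 3`, where
`n` is the number of leaves. -/
theorem stmt_8 {V : Type} [Fintype V] [DecidableEq V] (G : SimpleGraph V) [DecidableRel G.Adj]
    (hG : IsBinaryTree G) (u v : V) (q : Q4 V)
    (he : InteriorEdge G s(u, v)) (hd : Distinguishes G s(u, v) q.a q.b q.c q.d)
    (hcard : q.supp.card = 4) (hsub : ∀ t ∈ q.supp, G.degree t = 1)
    (x y : V) (hlx : G.degree x = 1) (hly : G.degree y = 1)
    (hxs : x ∉ q.supp) (hys : y ∉ q.supp) (hxy : x ≠ y) :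
    (subst G u v q x).toSym ≠ (subst G u v q y).toSym ∧
    (insert q.toSym (((Finset.univ.filter (fun t => G.degree t = 1)) \ q.supp).image
        (fun t => (subst G u v q t).toSym))).card
      = (Finset.univ.filter (fun t => G.degree t = 1)).card - 3 := by
  set L := Finset.univ.filter (fun t => G.degree t = 1) with hL
  have hsL : q.supp ⊆ L := fun t ht => by
    simp [hL]; exact hsub t ht
  have h4 : 4 ≤ L.card := hcard ▸ Finset.card_le_card hsL
  refine ⟨subst_ne G u v q hxs hxy, ?_⟩
  have hinj : Set.InjOn (fun t => (subst G u v q t).toSym) ↑(L \ q.supp) := by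
    intro s hs t ht hst
    by_contra hne
    have hs' : s ∉ q.supp := (Finset.mem_sdiff.mp hs).2
    exact subst_ne G u v q hs' hne hst
  have himg : ((L \ q.supp).image (fun t => (subst G u v q t).toSym)).card
      = L.card - 4 := by
    rw [Finset.card_image_of_injOn hinj, Finset.card_sdiff_of_subset hsL, hcard]
  have hnot : q.toSym ∉ (L \ q.supp).image (fun t => (subst G u v q t).toSym) := by
    intro h
    obtain ⟨t, ht, hteq⟩ := Finset.mem_image.mp h
    exact subst_ne_self G u v q (Finset.mem_sdiff.mp ht).2 hteq.symm
  rw [Finset.card_insert_of_notMem hnot, himg]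
  omega
end

section
/- If q_i and q_j are linked quartet trees distinguishing distinct adjacent interior edges of a binary tree T, then for any leaf x outside their combined support, q_i(x) ≠ q_j(x); equivalently, |supp(q_i(x)) ∪ supp(q_j(x))| ≠ 4. -/
open SimpleGraph Finset

set_option linter.unusedSectionVars false
set_option linter.unusedVariables false
set_option maxHeartbeats 2000000

namespace QTAux

variable {V : Type} [Fintype V] [DecidableEq V] {G : SimpleGraph V} [DecidableRel G.Adj]

lemma unique_path (hG : G.IsTree) {a b : V} {P Q : G.Walk a b}
    (hP : P.IsPath) (hQ : Q.IsPath) : P = Q := by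
  obtain ⟨R, -, hR⟩ := hG.existsUnique_path a b
  rw [hR P hP, hR Q hQ]

lemma walk_avoid {s : Set (Sym2 V)} {w : V} (hw : G.incidenceSet w ⊆ s) {a b : V}
    (q : (G.deleteEdges s).Walk a b) : a ≠ w → b ≠ w → w ∉ q.support := by
  induction q with
  | nil => intro ha _; simp [Ne.symm ha]
  | @cons a c b h q ih =>
    intro ha hb
    have hc : c ≠ w := by
      rintro rfl
      have h' := (SimpleGraph.deleteEdges_adj).mp h
      exact h'.2 (hw (G.mk'_mem_incidenceSet_iff.mpr ⟨h'.1, Or.inr rfl⟩))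
    rw [SimpleGraph.Walk.support_cons, List.mem_cons]
    rintro h2; rcases h2 with rfl | hmem
    · exact ha rfl
    · exact ih hc hb hmem


lemma edge_not_inc {a b w : V} {P : G.Walk a b} (hw : w ∉ P.support) :
    ∀ e ∈ P.edges, e ∉ G.incidenceSet w := by
  intro e he hinc
  induction e using Sym2.ind with
  | _ u v =>
    rcases (G.mk'_mem_incidenceSet_iff.mp hinc).2 with rfl | rfl
    · exact hw (P.fst_mem_support_of_mem_edges he)
    · exact hw (P.snd_mem_support_of_mem_edges he)

lemma exists_path_avoid {s : Set (Sym2 V)} {a b : V}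
    (h : (G.deleteEdges s).Reachable a b) :
    ∃ P : G.Walk a b, P.IsPath ∧ (∀ e ∈ P.edges, e ∉ s) ∧
      ∀ w, G.incidenceSet w ⊆ s → a ≠ w → b ≠ w → w ∉ P.support := by
  obtain ⟨q⟩ := h
  have hq : ∀ e ∈ q.edges, e ∈ G.edgeSet := by
    intro e he
    have := q.edges_subset_edgeSet he
    rw [SimpleGraph.edgeSet_deleteEdges] at this
    exact this.1
  refine ⟨(q.transfer G hq).bypass, SimpleGraph.Walk.bypass_isPath _, ?_, ?_⟩
  · intro e he
    have he' : e ∈ q.edges := by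
      have := (q.transfer G hq).edges_bypass_subset he
      rwa [SimpleGraph.Walk.edges_transfer] at this
    have := q.edges_subset_edgeSet he'
    rw [SimpleGraph.edgeSet_deleteEdges] at this
    exact this.2
  · intro w hws ha hb hmem
    have hmem' : w ∈ q.support := by
      have := (q.transfer G hq).support_bypass_subset hmem
      rwa [SimpleGraph.Walk.support_transfer] at this
    exact walk_avoid hws q ha hb hmem'

lemma reach_of_walk_avoid {s : Set (Sym2 V)} {a b : V} (P : G.Walk a b)
    (h : ∀ e ∈ P.edges, e ∉ s) : (G.deleteEdges s).Reachable a b :=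
  ⟨P.toDeleteEdges s h⟩

lemma adj_reach_delete {s : Set (Sym2 V)} {a b : V} (h : G.Adj a b)
    (he : s(a, b) ∉ s) : (G.deleteEdges s).Reachable a b :=
  SimpleGraph.Adj.reachable (by rw [SimpleGraph.deleteEdges_adj]; exact ⟨h, he⟩)

lemma no_triangle (hG : G.IsTree) {a b c : V} (hab : G.Adj a b) (hbc : G.Adj b c)
    (hca : G.Adj c a) : False := by
  have hP1 : (SimpleGraph.Walk.cons hab (SimpleGraph.Walk.cons hbc .nil)).IsPath := by
    simp [SimpleGraph.Walk.cons_isPath_iff, hab.ne, hbc.ne, hca.ne']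
  have hP2 : (SimpleGraph.Walk.cons hca.symm .nil : G.Walk a c).IsPath := by
    simp [SimpleGraph.Walk.cons_isPath_iff, hca.ne']
  have := unique_path hG hP1 hP2
  have hb : b ∈ (SimpleGraph.Walk.cons hca.symm .nil : G.Walk a c).support := by
    rw [← this]; simp
  simp [SimpleGraph.Walk.support_cons] at hb
  rcases hb with rfl | rfl
  · exact hab.ne rfl
  · exact hbc.ne rfl

lemma no_square (hG : G.IsTree) {a b c d : V} (hab : G.Adj a b) (hbc : G.Adj b c)
    (hcd : G.Adj c d) (hda : G.Adj d a) (hbd : b ≠ d) (hac : a ≠ c) : False := by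
  have hP1 : (SimpleGraph.Walk.cons hab (SimpleGraph.Walk.cons hbc .nil)).IsPath := by
    simp [SimpleGraph.Walk.cons_isPath_iff, hab.ne, hbc.ne, hac]
  have hP2 : (SimpleGraph.Walk.cons hda.symm (SimpleGraph.Walk.cons hcd.symm .nil) :
      G.Walk a c).IsPath := by
    simp [SimpleGraph.Walk.cons_isPath_iff, hda.ne', hcd.ne', hac]
  have := unique_path hG hP1 hP2
  have hb : b ∈ (SimpleGraph.Walk.cons hda.symm (SimpleGraph.Walk.cons hcd.symm .nil) :
      G.Walk a c).support := by
    rw [← this]; simp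
  simp [SimpleGraph.Walk.support_cons] at hb
  rcases hb with rfl | rfl | rfl
  · exact hab.ne rfl
  · exact hbd rfl
  · exact hbc.ne rfl

lemma sep_pair (hG : G.IsTree) {s : Set (Sym2 V)} {w a b : V} (hwa : G.Adj w a)
    (hwb : G.Adj w b) (hab : a ≠ b) (hs : G.incidenceSet w ⊆ s) :
    ¬ (G.deleteEdges s).Reachable a b := by
  intro hr
  obtain ⟨P, hP, -, hPs⟩ := exists_path_avoid hr
  have hwP : w ∉ P.support := hPs w hs hwa.ne' hwb.ne'
  have hP1 : (SimpleGraph.Walk.cons hwa P).IsPath := hP.cons hwP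
  have hP2 : (SimpleGraph.Walk.cons hwb .nil : G.Walk w b).IsPath := by
    simp [SimpleGraph.Walk.cons_isPath_iff, hwb.ne]
  have heq := unique_path hG hP1 hP2
  have ha : a ∈ (SimpleGraph.Walk.cons hwb .nil : G.Walk w b).support := by
    rw [← heq]; simp [SimpleGraph.Walk.support_cons, P.start_mem_support]
  simp [SimpleGraph.Walk.support_cons] at ha
  rcases ha with rfl | rfl
  · exact hwa.ne rfl
  · exact hab rfl

lemma sep_cross (hG : G.IsTree) {s : Set (Sym2 V)} {w p a b : V}
    (hwp : G.Adj w p) (hwa : G.Adj w a) (hpb : G.Adj p b) (hap : a ≠ p) (hbw : b ≠ w)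
    (hs1 : G.incidenceSet w ⊆ s) (hs2 : G.incidenceSet p ⊆ s) :
    ¬ (G.deleteEdges s).Reachable a b := by
  intro hr
  rcases eq_or_ne a b with rfl | hab
  · exact no_triangle hG hwp hpb hwa.symm
  obtain ⟨P, hP, -, hPs⟩ := exists_path_avoid hr
  have hwP : w ∉ P.support := hPs w hs1 hwa.ne' hbw
  have hpP : p ∉ P.support := hPs p hs2 hap hpb.ne'
  have hP1 : (SimpleGraph.Walk.cons hwa P).IsPath := hP.cons hwP
  have hP2 : (SimpleGraph.Walk.cons hwp (SimpleGraph.Walk.cons hpb .nil) :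
      G.Walk w b).IsPath := by
    simp [SimpleGraph.Walk.cons_isPath_iff, hwp.ne, hpb.ne, Ne.symm hbw]
  have heq := unique_path hG hP1 hP2
  have hp' : p ∈ (SimpleGraph.Walk.cons hwa P).support := by
    rw [heq]; simp
  simp [SimpleGraph.Walk.support_cons] at hp'
  rcases hp' with rfl | hmem
  · exact hwp.ne rfl
  · exact hpP hmem

lemma sep_edge (hG : G.IsTree) {s : Set (Sym2 V)} {α β : V} (h : G.Adj α β)
    (hs : s(α, β) ∈ s) : ¬ (G.deleteEdges s).Reachable α β := by
  intro hr
  obtain ⟨P, hP, hPe, -⟩ := exists_path_avoid hr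
  have hP2 : (SimpleGraph.Walk.cons h .nil : G.Walk α β).IsPath := by
    simp [SimpleGraph.Walk.cons_isPath_iff, h.ne]
  have heq := unique_path hG hP hP2
  have : s(α, β) ∈ P.edges := by rw [heq]; simp
  exact hPe _ this hs

lemma rep_exists (hconn : G.Connected) {w p : V} (hwp : G.Adj w p) {t : V}
    (htw : t ≠ w) (htp : t ≠ p) :
    ∃ n, ((G.Adj w n ∧ n ≠ p) ∨ (G.Adj p n ∧ n ≠ w)) ∧
      (G.deleteEdges (G.incidenceSet w ∪ G.incidenceSet p)).Reachable t n := by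
  obtain ⟨q⟩ := hconn.preconnected t w
  suffices H : ∀ {t u : V} (q : G.Walk t u), w = u → t ≠ w → t ≠ p →
      ∃ n, ((G.Adj w n ∧ n ≠ p) ∨ (G.Adj p n ∧ n ≠ w)) ∧
        (G.deleteEdges (G.incidenceSet w ∪ G.incidenceSet p)).Reachable t n by
    exact H q rfl htw htp
  intro t u q
  induction q with
  | nil => rintro rfl h _; exact absurd rfl h
  | @cons t c u h q ih =>
    rintro rfl htw' htp'
    by_cases hcw : c = w
    · subst hcw
      exact ⟨t, Or.inl ⟨h.symm, htp'⟩, SimpleGraph.Reachable.refl t⟩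
    by_cases hcp : c = p
    · subst hcp
      exact ⟨t, Or.inr ⟨h.symm, htw'⟩, SimpleGraph.Reachable.refl t⟩
    obtain ⟨n, hn, hr⟩ := ih rfl hcw hcp
    refine ⟨n, hn, (adj_reach_delete h ?_).trans hr⟩
    rintro (h' | h') <;>
      rcases (G.mk'_mem_incidenceSet_iff.mp h').2 with h'' | h''
    · exact htw' h''.symm
    · exact hcw h''.symm
    · exact htp' h''.symm
    · exact hcp h''.symm

lemma cross_z (hG : G.IsTree) {w p r z t : V} (hwp : G.Adj w p) (hwr : G.Adj w r)
    (hwz : G.Adj w z) (hzp : z ≠ p) (hzr : z ≠ r)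
    (htw : t ≠ w) (htp : t ≠ p) (htr : t ≠ r)
    (h : (G.deleteEdges (G.incidenceSet w ∪ G.incidenceSet p)).Reachable t z) :
    (G.deleteEdges (G.incidenceSet w ∪ G.incidenceSet r)).Reachable t z := by
  obtain ⟨P, hP, hPe, hPs⟩ := exists_path_avoid h
  have hwP : w ∉ P.support := hPs w Set.subset_union_left htw hwz.ne'
  have hrP : r ∉ P.support := by
    intro hrP
    have hQ : (P.dropUntil r hrP).IsPath := hP.dropUntil hrP
    have hwQ : w ∉ (P.dropUntil r hrP).support :=
      fun hc => hwP (P.support_dropUntil_subset hrP hc)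
    have hP2 : (SimpleGraph.Walk.cons hwr.symm (SimpleGraph.Walk.cons hwz .nil) :
        G.Walk r z).IsPath := by
      simp [SimpleGraph.Walk.cons_isPath_iff, hwr.ne', hwz.ne, Ne.symm hzr]
    have heq := unique_path hG hQ hP2
    exact hwQ (by rw [heq]; simp)
  refine reach_of_walk_avoid P ?_
  intro e he h'
  exact h'.elim (edge_not_inc hwP e he) (edge_not_inc hrP e he)

lemma cross_p (hG : G.IsTree) {w p r s₀ t : V} (hwp : G.Adj w p) (hwr : G.Adj w r)
    (hps : G.Adj p s₀) (hrp : r ≠ p) (hsw : s₀ ≠ w) (hsr : s₀ ≠ r)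
    (htw : t ≠ w) (htp : t ≠ p) (htr : t ≠ r)
    (h : (G.deleteEdges (G.incidenceSet w ∪ G.incidenceSet p)).Reachable t s₀) :
    (G.deleteEdges (G.incidenceSet w ∪ G.incidenceSet r)).Reachable t p := by
  obtain ⟨P, hP, hPe, hPs⟩ := exists_path_avoid h
  have hwP : w ∉ P.support := hPs w Set.subset_union_left htw hsw
  have hpP : p ∉ P.support := hPs p Set.subset_union_right htp hps.ne'
  have hrP : r ∉ P.support := by
    intro hrP
    have hQ : (P.dropUntil r hrP).IsPath := hP.dropUntil hrP
    have hwQ : w ∉ (P.dropUntil r hrP).support :=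
      fun hc => hwP (P.support_dropUntil_subset hrP hc)
    have hP2 : (SimpleGraph.Walk.cons hwr.symm (SimpleGraph.Walk.cons hwp
        (SimpleGraph.Walk.cons hps .nil)) : G.Walk r s₀).IsPath := by
      simp [SimpleGraph.Walk.cons_isPath_iff, hwr.ne', hwp.ne, hps.ne, Ne.symm hsr,
        Ne.symm hsw, hrp]
    have heq := unique_path hG hQ hP2
    exact hwQ (by rw [heq]; simp)
  refine reach_of_walk_avoid (P.append (SimpleGraph.Walk.cons hps.symm .nil)) ?_
  intro e he
  rw [SimpleGraph.Walk.edges_append] at he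
  rcases List.mem_append.mp he with he | he
  · intro h'
    exact h'.elim (edge_not_inc hwP e he) (edge_not_inc hrP e he)
  · simp only [SimpleGraph.Walk.edges_cons, SimpleGraph.Walk.edges_nil,
      List.mem_singleton] at he
    subst he
    rintro (h' | h') <;> rcases (G.mk'_mem_incidenceSet_iff.mp h').2 with h'' | h''
    · exact hsw h''.symm
    · exact hwp.ne h''
    · exact hsr h''.symm
    · exact hrp h''
  
lemma cross_p' (hG : G.IsTree) {w p r p1 p2 t : V} (hwp : G.Adj w p) (hwr : G.Adj w r)
    (hrp : r ≠ p) (hNp : ∀ y, G.Adj p y → y = w ∨ y = p1 ∨ y = p2)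
    (htw : t ≠ w) (htp : t ≠ p) (htr : t ≠ r)
    (h : (G.deleteEdges (G.incidenceSet w ∪ G.incidenceSet r)).Reachable t p) :
    ∃ s₀, (s₀ = p1 ∨ s₀ = p2) ∧
      (G.deleteEdges (G.incidenceSet w ∪ G.incidenceSet p)).Reachable t s₀ := by
  obtain ⟨P, hP, hPe, hPs⟩ := exists_path_avoid h
  have hwP : w ∉ P.support := hPs w Set.subset_union_left htw hwp.ne'
  have hrP : r ∉ P.support := hPs r Set.subset_union_right htr (Ne.symm hrp)
  obtain ⟨s₀, hadj, Q, hPQ⟩ := SimpleGraph.Walk.exists_eq_cons_of_ne (Ne.symm htp) P.reverse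
  have hrev : P.reverse.IsPath := hP.reverse
  rw [hPQ, SimpleGraph.Walk.cons_isPath_iff] at hrev
  have hQsup : ∀ y ∈ Q.support, y ∈ P.support := by
    intro y hy
    have : y ∈ P.reverse.support := by
      rw [hPQ, SimpleGraph.Walk.support_cons]; exact List.mem_cons_of_mem _ hy
    rwa [SimpleGraph.Walk.support_reverse, List.mem_reverse] at this
  have hsP : s₀ ∈ P.support := hQsup s₀ Q.start_mem_support
  have hsw : s₀ ≠ w := fun hc => hwP (hc ▸ hsP)
  have hQe : ∀ e ∈ Q.edges, e ∈ P.edges := by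
    intro e heq
    have : e ∈ P.reverse.edges := by
      rw [hPQ, SimpleGraph.Walk.edges_cons]; exact List.mem_cons_of_mem _ heq
    rwa [SimpleGraph.Walk.edges_reverse, List.mem_reverse] at this
  refine ⟨s₀, ?_, reach_of_walk_avoid Q.reverse ?_⟩
  · rcases hNp s₀ hadj with hc | hc | hc
    · exact absurd hc hsw
    · exact Or.inl hc
    · exact Or.inr hc
  · intro e he
    rw [SimpleGraph.Walk.edges_reverse, List.mem_reverse] at he
    intro h'
    refine h'.elim (fun hc => ?_) (edge_not_inc hrev.2 e he)
    exact (hPe e (hQe e he)).elim (Or.inl hc)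

lemma sym2_ne_of {α β γ δ : V} (h1 : α = γ → β ≠ δ) (h2 : α = δ → β ≠ γ) :
    s(α, β) ≠ s(γ, δ) := by
  intro h
  rw [Sym2.eq_iff] at h
  rcases h with ⟨rfl, rfl⟩ | ⟨rfl, rfl⟩
  · exact h1 rfl rfl
  · exact h2 rfl rfl

lemma notin_single {e e' : Sym2 V} (h : e ≠ e') : e ∉ ({e'} : Set (Sym2 V)) :=
  fun hc => h (Set.mem_singleton_iff.mp hc)

lemma contra_core {w p a b c d ρ ρc ρd : V} {e' : Sym2 V}
    (hd : Distinguishes G s(w, p) a b c d)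
    (he'E : e' ∈ G.edgeSet)
    (hle : G.deleteEdges (G.incidenceSet w ∪ G.incidenceSet p) ≤ G.deleteEdges {e'})
    (hρa : (G.deleteEdges (G.incidenceSet w ∪ G.incidenceSet p)).Reachable a ρ)
    (hρb : (G.deleteEdges (G.incidenceSet w ∪ G.incidenceSet p)).Reachable b ρ)
    (hρc : (G.deleteEdges (G.incidenceSet w ∪ G.incidenceSet p)).Reachable c ρc)
    (hρd : (G.deleteEdges (G.incidenceSet w ∪ G.incidenceSet p)).Reachable d ρd)
    (hρw : ¬ (G.deleteEdges {e'}).Reachable ρ w)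
    (hcw : (G.deleteEdges {e'}).Reachable ρc w)
    (hdw : (G.deleteEdges {e'}).Reachable ρd w)
    (hne : e' ≠ s(w, p)) : False := by
  apply hne
  apply hd.2
  refine ⟨he'E, ?_, ?_, ?_⟩
  · exact (Reachable.mono hle hρa).trans (Reachable.mono hle hρb).symm
  · exact ((Reachable.mono hle hρc).trans (hcw.trans hdw.symm)).trans
      (Reachable.mono hle hρd).symm
  · intro hac
    exact hρw ((((Reachable.mono hle hρa).symm.trans hac).trans
      (Reachable.mono hle hρc)).trans hcw)

lemma hard_pair (hG : G.IsTree) {w p r z p1 p2 a b c d : V}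
    (hwp : G.Adj w p) (hwr : G.Adj w r) (hwz : G.Adj w z)
    (hp1 : G.Adj p p1) (hp2 : G.Adj p p2)
    (hzr : z ≠ r) (hzp : z ≠ p) (hrp : r ≠ p) (hp1w : p1 ≠ w) (hp2w : p2 ≠ w)
    (hp12 : p1 ≠ p2) (hzp1 : z ≠ p1) (hzp2 : z ≠ p2) (hrp1 : r ≠ p1) (hrp2 : r ≠ p2)
    (hd : Distinguishes G s(w, p) a b c d)
    {ρ ρc ρd : V}
    (hρmem : ρ = z ∨ ρ = r ∨ ρ = p1 ∨ ρ = p2)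
    (hρcmem : ρc = z ∨ ρc = r ∨ ρc = p1 ∨ ρc = p2)
    (hρdmem : ρd = z ∨ ρd = r ∨ ρd = p1 ∨ ρd = p2)
    (hρcne : ρc ≠ ρ) (hρdne : ρd ≠ ρ)
    (hρa : (G.deleteEdges (G.incidenceSet w ∪ G.incidenceSet p)).Reachable a ρ)
    (hρb : (G.deleteEdges (G.incidenceSet w ∪ G.incidenceSet p)).Reachable b ρ)
    (hρc : (G.deleteEdges (G.incidenceSet w ∪ G.incidenceSet p)).Reachable c ρc)
    (hρd : (G.deleteEdges (G.incidenceSet w ∪ G.incidenceSet p)).Reachable d ρd) :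
    False := by
  have hinc : ∀ e' ∈ (G.incidenceSet w ∪ G.incidenceSet p : Set (Sym2 V)),
      G.deleteEdges (G.incidenceSet w ∪ G.incidenceSet p) ≤ G.deleteEdges {e'} :=
    fun e' he' => SimpleGraph.deleteEdges_anti (Set.singleton_subset_iff.mpr he')
  rcases hρmem with h | h | h | h
  · -- ρ = z, e' = s(w,z)
    rw [h] at hρa hρb hρcne hρdne
    have key : ∀ τ, (τ = z ∨ τ = r ∨ τ = p1 ∨ τ = p2) → τ ≠ z →
        (G.deleteEdges ({s(w, z)} : Set (Sym2 V))).Reachable τ w := by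
      rintro τ (rfl | rfl | rfl | rfl) hτ
      · exact absurd rfl hτ
      · exact adj_reach_delete hwr.symm (notin_single (sym2_ne_of
          (fun h _ => hwr.ne' h) (fun h _ => hzr h.symm)))
      · exact (adj_reach_delete hp1.symm (notin_single (sym2_ne_of
          (fun h _ => hp1w h) (fun h _ => hzp1 h.symm)))).trans
          (adj_reach_delete hwp.symm (notin_single (sym2_ne_of
          (fun h _ => hwp.ne' h) (fun h _ => hzp h.symm))))
      · exact (adj_reach_delete hp2.symm (notin_single (sym2_ne_of
          (fun h _ => hp2w h) (fun h _ => hzp2 h.symm)))).trans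
          (adj_reach_delete hwp.symm (notin_single (sym2_ne_of
          (fun h _ => hwp.ne' h) (fun h _ => hzp h.symm))))
    exact contra_core hd (G.mem_edgeSet.mpr hwz)
      (hinc _ (Or.inl (G.mk'_mem_incidenceSet_iff.mpr ⟨hwz, Or.inl rfl⟩)))
      hρa hρb hρc hρd
      (fun hc => sep_edge hG hwz (Set.mem_singleton _) hc.symm)
      (key ρc hρcmem hρcne) (key ρd hρdmem hρdne)
      (sym2_ne_of (fun _ => hzp) (fun _ hh => hwz.ne hh.symm))
  · -- ρ = r, e' = s(w,r)
    rw [h] at hρa hρb hρcne hρdne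
    have key : ∀ τ, (τ = z ∨ τ = r ∨ τ = p1 ∨ τ = p2) → τ ≠ r →
        (G.deleteEdges ({s(w, r)} : Set (Sym2 V))).Reachable τ w := by
      rintro τ (rfl | rfl | rfl | rfl) hτ
      · exact adj_reach_delete hwz.symm (notin_single (sym2_ne_of
          (fun h _ => hwz.ne' h) (fun h _ => hzr h)))
      · exact absurd rfl hτ
      · exact (adj_reach_delete hp1.symm (notin_single (sym2_ne_of
          (fun h _ => hp1w h) (fun h _ => hrp1 h.symm)))).trans
          (adj_reach_delete hwp.symm (notin_single (sym2_ne_of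
          (fun h _ => hwp.ne' h) (fun h _ => hrp h.symm))))
      · exact (adj_reach_delete hp2.symm (notin_single (sym2_ne_of
          (fun h _ => hp2w h) (fun h _ => hrp2 h.symm)))).trans
          (adj_reach_delete hwp.symm (notin_single (sym2_ne_of
          (fun h _ => hwp.ne' h) (fun h _ => hrp h.symm))))
    exact contra_core hd (G.mem_edgeSet.mpr hwr)
      (hinc _ (Or.inl (G.mk'_mem_incidenceSet_iff.mpr ⟨hwr, Or.inl rfl⟩)))
      hρa hρb hρc hρd
      (fun hc => sep_edge hG hwr (Set.mem_singleton _) hc.symm)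
      (key ρc hρcmem hρcne) (key ρd hρdmem hρdne)
      (sym2_ne_of (fun _ => hrp) (fun _ hh => hwr.ne hh.symm))
  · -- ρ = p1, e' = s(p,p1)
    rw [h] at hρa hρb hρcne hρdne
    have key : ∀ τ, (τ = z ∨ τ = r ∨ τ = p1 ∨ τ = p2) → τ ≠ p1 →
        (G.deleteEdges ({s(p, p1)} : Set (Sym2 V))).Reachable τ w := by
      rintro τ (rfl | rfl | rfl | rfl) hτ
      · exact adj_reach_delete hwz.symm (notin_single (sym2_ne_of
          (fun h _ => hzp h) (fun h _ => hzp1 h)))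
      · exact adj_reach_delete hwr.symm (notin_single (sym2_ne_of
          (fun h _ => hrp h) (fun h _ => hrp1 h)))
      · exact absurd rfl hτ
      · exact (adj_reach_delete hp2.symm (notin_single (sym2_ne_of
          (fun h _ => hp2.ne' h) (fun h _ => hp12.symm h)))).trans
          (adj_reach_delete hwp.symm (notin_single (sym2_ne_of
          (fun _ h => hp1w h.symm) (fun h _ => hp1.ne h))))
    have hpw : ¬ (G.deleteEdges ({s(p, p1)} : Set (Sym2 V))).Reachable p1 w := by
      intro hc
      have hwp' : (G.deleteEdges ({s(p, p1)} : Set (Sym2 V))).Reachable w p :=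
        adj_reach_delete hwp (notin_single (sym2_ne_of
          (fun hh _ => hwp.ne hh) (fun hh _ => hp1w hh.symm)))
      exact sep_edge hG hp1 (Set.mem_singleton _) (hwp'.symm.trans hc.symm)
    exact contra_core hd (G.mem_edgeSet.mpr hp1)
      (hinc _ (Or.inr (G.mk'_mem_incidenceSet_iff.mpr ⟨hp1, Or.inl rfl⟩)))
      hρa hρb hρc hρd hpw
      (key ρc hρcmem hρcne) (key ρd hρdmem hρdne)
      (sym2_ne_of (fun hh _ => hwp.ne' hh) (fun _ => hp1w))
  · -- ρ = p2, e' = s(p,p2)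
    rw [h] at hρa hρb hρcne hρdne
    have key : ∀ τ, (τ = z ∨ τ = r ∨ τ = p1 ∨ τ = p2) → τ ≠ p2 →
        (G.deleteEdges ({s(p, p2)} : Set (Sym2 V))).Reachable τ w := by
      rintro τ (rfl | rfl | rfl | rfl) hτ
      · exact adj_reach_delete hwz.symm (notin_single (sym2_ne_of
          (fun h _ => hzp h) (fun h _ => hzp2 h)))
      · exact adj_reach_delete hwr.symm (notin_single (sym2_ne_of
          (fun h _ => hrp h) (fun h _ => hrp2 h)))
      · exact (adj_reach_delete hp1.symm (notin_single (sym2_ne_of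
          (fun h _ => hp1.ne' h) (fun h _ => hp12 h)))).trans
          (adj_reach_delete hwp.symm (notin_single (sym2_ne_of
          (fun _ h => hp2w h.symm) (fun h _ => hp2.ne h))))
      · exact absurd rfl hτ
    have hpw : ¬ (G.deleteEdges ({s(p, p2)} : Set (Sym2 V))).Reachable p2 w := by
      intro hc
      have hwp' : (G.deleteEdges ({s(p, p2)} : Set (Sym2 V))).Reachable w p :=
        adj_reach_delete hwp (notin_single (sym2_ne_of
          (fun hh _ => hwp.ne hh) (fun hh _ => hp2w hh.symm)))
      exact sep_edge hG hp2 (Set.mem_singleton _) (hwp'.symm.trans hc.symm)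
    exact contra_core hd (G.mem_edgeSet.mpr hp2)
      (hinc _ (Or.inr (G.mk'_mem_incidenceSet_iff.mpr ⟨hp2, Or.inl rfl⟩)))
      hρa hρb hρc hρd hpw
      (key ρc hρcmem hρcne) (key ρd hρdmem hρdne)
      (sym2_ne_of (fun hh _ => hwp.ne' hh) (fun _ => hp2w))

lemma four_distinct {α β γ δ : V} (h : ({α, β, γ, δ} : Finset V).card = 4) :
    α ≠ β ∧ α ≠ γ ∧ α ≠ δ ∧ β ≠ γ ∧ β ≠ δ ∧ γ ≠ δ := by
  have h3 : ∀ x y z : V, ({x, y, z} : Finset V).card ≤ 3 := by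
    intro x y z
    refine le_trans (Finset.card_insert_le _ _) (Nat.succ_le_succ ?_)
    exact le_trans (Finset.card_insert_le _ _) (by simp)
  have key : ∀ (S : Finset V), ({α, β, γ, δ} : Finset V) ⊆ S → S.card ≤ 3 → False := by
    intro S hS hc
    have := le_trans (Finset.card_le_card hS) hc
    omega
  refine ⟨?_, ?_, ?_, ?_, ?_, ?_⟩ <;> intro he
  · exact key {β, γ, δ} (by intro t ht; simp only [Finset.mem_insert,
      Finset.mem_singleton, he] at ht ⊢; tauto) (h3 _ _ _)
  · exact key {β, γ, δ} (by intro t ht; simp only [Finset.mem_insert,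
      Finset.mem_singleton, he] at ht ⊢; tauto) (h3 _ _ _)
  · exact key {β, γ, δ} (by intro t ht; simp only [Finset.mem_insert,
      Finset.mem_singleton, he] at ht ⊢; tauto) (h3 _ _ _)
  · exact key {α, γ, δ} (by intro t ht; simp only [Finset.mem_insert,
      Finset.mem_singleton, he] at ht ⊢; tauto) (h3 _ _ _)
  · exact key {α, γ, δ} (by intro t ht; simp only [Finset.mem_insert,
      Finset.mem_singleton, he] at ht ⊢; tauto) (h3 _ _ _)
  · exact key {α, β, δ} (by intro t ht; simp only [Finset.mem_insert,
      Finset.mem_singleton, he] at ht ⊢; tauto) (h3 _ _ _)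

lemma card4 {α β γ δ : V} (h1 : α ≠ β) (h2 : α ≠ γ) (h3 : α ≠ δ) (h4 : β ≠ γ)
    (h5 : β ≠ δ) (h6 : γ ≠ δ) : ({α, β, γ, δ} : Finset V).card = 4 := by
  rw [Finset.card_insert_of_notMem (by simp [h1, h2, h3]),
    Finset.card_insert_of_notMem (by simp [h4, h5]),
    Finset.card_insert_of_notMem (by simp [h6]), Finset.card_singleton]

lemma q4_distinct {q : Q4 V} (h : q.supp.card = 4) :
    q.a ≠ q.b ∧ q.a ≠ q.c ∧ q.a ≠ q.d ∧ q.b ≠ q.c ∧ q.b ≠ q.d ∧ q.c ≠ q.d :=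
  four_distinct (by rw [Q4.supp] at h; exact h)

lemma subst_card {u v x : V} {q : Q4 V} (hc : q.supp.card = 4) (hx : x ∉ q.supp) :
    (subst G u v q x).supp.card = 4 := by
  obtain ⟨h1, h2, h3, h4, h5, h6⟩ := q4_distinct hc
  rw [Q4.supp] at hx
  simp only [Finset.mem_insert, Finset.mem_singleton, not_or] at hx
  obtain ⟨hxa, hxb, hxc, hxd⟩ := hx
  unfold subst
  split_ifs <;> rw [Q4.supp]
  · exact card4 hxb hxc hxd h4 h5 h6
  · exact card4 (Ne.symm hxa) h2 h3 hxc hxd h6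
  · exact card4 h1 (Ne.symm hxa) h3 (Ne.symm hxb) h5 hxd
  · exact card4 h1 h2 (Ne.symm hxa) h4 (Ne.symm hxb) (Ne.symm hxc)

lemma subst_supp {u v x y : V} {q : Q4 V} (hc : q.supp.card = 4)
    (hy : y = q.a ∨ y = q.b ∨ y = q.c ∨ y = q.d)
    (hxy : SameClass G u v x y)
    (huniq : ∀ t, (t = q.a ∨ t = q.b ∨ t = q.c ∨ t = q.d) →
      SameClass G u v x t → t = y) :
    (subst G u v q x).supp = insert x (q.supp.erase y) := by
  obtain ⟨h1, h2, h3, h4, h5, h6⟩ := q4_distinct hc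
  rcases hy with hy | hy | hy | hy
  · subst hy
    have ha : SameClass G u v x q.a := hxy
    unfold subst
    rw [if_pos ha, Q4.supp, Q4.supp, Finset.erase_insert (by simp [h1, h2, h3])]
  · subst hy
    have hna : ¬ SameClass G u v x q.a :=
      fun hcon => h1 (huniq q.a (Or.inl rfl) hcon)
    unfold subst
    rw [if_neg hna, if_pos hxy, Q4.supp, Q4.supp,
      Finset.erase_insert_of_ne h1, Finset.erase_insert (by simp [h4, h5]),
      Finset.insert_comm]
  · subst hy
    have hna : ¬ SameClass G u v x q.a :=
      fun hcon => h2 (huniq q.a (Or.inl rfl) hcon)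
    have hnb : ¬ SameClass G u v x q.b :=
      fun hcon => h4 (huniq q.b (Or.inr (Or.inl rfl)) hcon)
    unfold subst
    rw [if_neg hna, if_neg hnb, if_pos hxy, Q4.supp, Q4.supp,
      Finset.erase_insert_of_ne h2, Finset.erase_insert_of_ne h4,
      Finset.erase_insert (by simp [h6]),
      Finset.insert_comm x q.a, Finset.insert_comm x q.b]
  · subst hy
    have hna : ¬ SameClass G u v x q.a :=
      fun hcon => h3 (huniq q.a (Or.inl rfl) hcon)
    have hnb : ¬ SameClass G u v x q.b :=
      fun hcon => h5 (huniq q.b (Or.inr (Or.inl rfl)) hcon)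
    have hnc : ¬ SameClass G u v x q.c :=
      fun hcon => h6 (huniq q.c (Or.inr (Or.inr (Or.inl rfl))) hcon)
    unfold subst
    rw [if_neg hna, if_neg hnb, if_neg hnc, Q4.supp, Q4.supp,
      Finset.erase_insert_of_ne h3, Finset.erase_insert_of_ne h5,
      Finset.erase_insert_of_ne h6, Finset.erase_singleton]
    rw [Finset.insert_comm x q.a, Finset.insert_comm x q.b]
    simp [Finset.pair_comm x q.c]

lemma toSym_supp {q q' : Q4 V} (h : q.toSym = q'.toSym) : q.supp = q'.supp := by
  rw [Q4.toSym, Q4.toSym, Sym2.eq_iff] at h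
  rcases h with ⟨h1, h2⟩ | ⟨h1, h2⟩ <;> rw [Sym2.eq_iff] at h1 h2 <;>
    rcases h1 with ⟨ha, hb⟩ | ⟨ha, hb⟩ <;> rcases h2 with ⟨hc, hd⟩ | ⟨hc, hd⟩ <;>
    (ext t; simp only [Q4.supp, Finset.mem_insert, Finset.mem_singleton,
      ha, hb, hc, hd]; try tauto)

lemma subst_comm (G : SimpleGraph V) (u v : V) (q : Q4 V) (x : V) :
    subst G u v q x = subst G v u q x := by
  have hcl : SameClass G u v = SameClass G v u := by
    unfold SameClass; rw [Set.union_comm]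
  unfold subst
  rw [hcl]

lemma dist_swap {e : Sym2 V} {a b c d : V} (h : Distinguishes G e a b c d) :
    Distinguishes G e c d a b :=
  ⟨⟨h.1.1, h.1.2.2.1, h.1.2.1, fun hx => h.1.2.2.2 hx.symm⟩,
    fun e' hs => h.2 e' ⟨hs.1, hs.2.2.1, hs.2.1, fun hx => hs.2.2.2 hx.symm⟩⟩

lemma core (hT : G.IsTree) {w p r : V} (qi qj : Q4 V)
    (hwp : G.Adj w p) (hwr : G.Adj w r) (hpr : p ≠ r)
    (hdegw : G.degree w = 3) (hdegp : G.degree p = 3) (hdegr : G.degree r = 3)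
    (hdi : Distinguishes G s(w, p) qi.a qi.b qi.c qi.d)
    (hdj : Distinguishes G s(w, r) qj.a qj.b qj.c qj.d)
    (hci : qi.supp.card = 4) (hcj : qj.supp.card = 4)
    (hdeg : ∀ t ∈ qi.supp ∪ qj.supp, G.degree t = 1)
    (x : V) (hlx : G.degree x = 1) (hxs : x ∉ qi.supp ∪ qj.supp) :
    ∃ E, E ∈ (subst G w r qj x).supp ∧ E ∉ (subst G w p qi x).supp := by
  classical
  have hconn : G.Connected := hT.isConnected
  -- third neighbor z of w
  obtain ⟨z, hzmem, hznotin⟩ : ∃ z ∈ G.neighborFinset w, z ∉ ({p, r} : Finset V) := by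
    by_contra hcon
    push_neg at hcon
    have hsub : G.neighborFinset w ⊆ {p, r} := fun t ht => hcon t ht
    have hle := Finset.card_le_card hsub
    rw [SimpleGraph.card_neighborFinset_eq_degree, hdegw] at hle
    have : ({p, r} : Finset V).card ≤ 2 :=
      le_trans (Finset.card_insert_le _ _) (by simp)
    omega
  have hwz : G.Adj w z := (SimpleGraph.mem_neighborFinset _ _ _).mp hzmem
  have hzp : z ≠ p := by intro h; apply hznotin; simp [h]
  have hzr : z ≠ r := by intro h; apply hznotin; simp [h]
  -- other neighbors p1 p2 of p
  have hcardp : ((G.neighborFinset p).erase w).card = 2 := by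
    rw [Finset.card_erase_of_mem (by
      rw [SimpleGraph.mem_neighborFinset]; exact hwp.symm),
      SimpleGraph.card_neighborFinset_eq_degree, hdegp]
  obtain ⟨p1, hp1m, p2, hp2m, hp12⟩ := Finset.one_lt_card.mp (by omega :
    1 < ((G.neighborFinset p).erase w).card)
  have hp1 : G.Adj p p1 := by
    have := Finset.mem_of_mem_erase hp1m
    rwa [SimpleGraph.mem_neighborFinset] at this
  have hp2 : G.Adj p p2 := by
    have := Finset.mem_of_mem_erase hp2m
    rwa [SimpleGraph.mem_neighborFinset] at this
  have hp1w : p1 ≠ w := Finset.ne_of_mem_erase hp1m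
  have hp2w : p2 ≠ w := Finset.ne_of_mem_erase hp2m
  -- other neighbors r1 r2 of r
  have hcardr : ((G.neighborFinset r).erase w).card = 2 := by
    rw [Finset.card_erase_of_mem (by
      rw [SimpleGraph.mem_neighborFinset]; exact hwr.symm),
      SimpleGraph.card_neighborFinset_eq_degree, hdegr]
  obtain ⟨r1, hr1m, r2, hr2m, hr12⟩ := Finset.one_lt_card.mp (by omega :
    1 < ((G.neighborFinset r).erase w).card)
  have hr1 : G.Adj r r1 := by
    have := Finset.mem_of_mem_erase hr1m
    rwa [SimpleGraph.mem_neighborFinset] at this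
  have hr2 : G.Adj r r2 := by
    have := Finset.mem_of_mem_erase hr2m
    rwa [SimpleGraph.mem_neighborFinset] at this
  have hr1w : r1 ≠ w := Finset.ne_of_mem_erase hr1m
  have hr2w : r2 ≠ w := Finset.ne_of_mem_erase hr2m
  -- neighbor characterizations
  have hchar : ∀ (v0 : V) (n1 n2 n3 : V), G.degree v0 = 3 → G.Adj v0 n1 → G.Adj v0 n2 →
      G.Adj v0 n3 → n1 ≠ n2 → n1 ≠ n3 → n2 ≠ n3 →
      ∀ y, G.Adj v0 y → y = n1 ∨ y = n2 ∨ y = n3 := by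
    intro v0 n1 n2 n3 hdeg0 h1 h2 h3 h12 h13 h23 y hy
    have hsub : ({n1, n2, n3} : Finset V) ⊆ G.neighborFinset v0 := by
      intro t ht
      simp only [Finset.mem_insert, Finset.mem_singleton] at ht
      rw [SimpleGraph.mem_neighborFinset]
      rcases ht with rfl | rfl | rfl
      exacts [h1, h2, h3]
    have hcard : ({n1, n2, n3} : Finset V).card = 3 := by
      rw [Finset.card_insert_of_notMem (by simp [h12, h13]),
        Finset.card_insert_of_notMem (by simp [h23]), Finset.card_singleton]
    have heq : ({n1, n2, n3} : Finset V) = G.neighborFinset v0 :=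
      Finset.eq_of_subset_of_card_le hsub (by
        rw [SimpleGraph.card_neighborFinset_eq_degree, hdeg0, hcard])
    have : y ∈ G.neighborFinset v0 := (SimpleGraph.mem_neighborFinset _ _ _).mpr hy
    rw [← heq] at this
    simpa using this
  have hNw : ∀ y, G.Adj w y → y = p ∨ y = r ∨ y = z :=
    hchar w p r z hdegw hwp hwr hwz hpr (Ne.symm hzp) (Ne.symm hzr)
  -- distinctness
  have hp1p : p1 ≠ p := hp1.ne'
  have hp2p : p2 ≠ p := hp2.ne'
  have hr1r : r1 ≠ r := hr1.ne'
  have hr2r : r2 ≠ r := hr2.ne'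
  have hp1r : p1 ≠ r := by
    rintro rfl; exact no_triangle hT hwp hp1 hwr.symm
  have hp2r : p2 ≠ r := by
    rintro rfl; exact no_triangle hT hwp hp2 hwr.symm
  have hr1p : r1 ≠ p := by
    rintro rfl; exact no_triangle hT hwr hr1 hwp.symm
  have hr2p : r2 ≠ p := by
    rintro rfl; exact no_triangle hT hwr hr2 hwp.symm
  have hp1z : p1 ≠ z := by
    rintro rfl; exact no_triangle hT hwp hp1 hwz.symm
  have hp2z : p2 ≠ z := by
    rintro rfl; exact no_triangle hT hwp hp2 hwz.symm
  have hr1z : r1 ≠ z := by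
    rintro rfl; exact no_triangle hT hwr hr1 hwz.symm
  have hr2z : r2 ≠ z := by
    rintro rfl; exact no_triangle hT hwr hr2 hwz.symm
  have hr1p1 : r1 ≠ p1 := by
    rintro rfl; exact no_square hT hwp hp1 hr1.symm hwr.symm hpr (Ne.symm hp1w)
  have hr1p2 : r1 ≠ p2 := by
    rintro rfl; exact no_square hT hwp hp2 hr1.symm hwr.symm hpr (Ne.symm hp2w)
  have hr2p1 : r2 ≠ p1 := by
    rintro rfl; exact no_square hT hwp hp1 hr2.symm hwr.symm hpr (Ne.symm hp1w)
  have hr2p2 : r2 ≠ p2 := by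
    rintro rfl; exact no_square hT hwp hp2 hr2.symm hwr.symm hpr (Ne.symm hp2w)
  have hNp : ∀ y, G.Adj p y → y = w ∨ y = p1 ∨ y = p2 :=
    hchar p w p1 p2 hdegp hwp.symm hp1 hp2 (Ne.symm hp1w) (Ne.symm hp2w) hp12
  have hNr : ∀ y, G.Adj r y → y = w ∨ y = r1 ∨ y = r2 :=
    hchar r w r1 r2 hdegr hwr.symm hr1 hr2 (Ne.symm hr1w) (Ne.symm hr2w) hr12
  -- reps
  have rep1 : ∀ t, t ≠ w → t ≠ p → ∃ ρ, (ρ = z ∨ ρ = r ∨ ρ = p1 ∨ ρ = p2) ∧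
      SameClass G w p t ρ := by
    intro t htw htp
    obtain ⟨n, hn, hre⟩ := rep_exists hconn hwp htw htp
    rcases hn with ⟨hwn, hnp⟩ | ⟨hpn, hnw⟩
    · rcases hNw n hwn with hc | hc | hc
      · exact absurd hc hnp
      · exact ⟨r, Or.inr (Or.inl rfl), hc ▸ hre⟩
      · exact ⟨z, Or.inl rfl, hc ▸ hre⟩
    · rcases hNp n hpn with hc | hc | hc
      · exact absurd hc hnw
      · exact ⟨p1, Or.inr (Or.inr (Or.inl rfl)), hc ▸ hre⟩
      · exact ⟨p2, Or.inr (Or.inr (Or.inr rfl)), hc ▸ hre⟩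
  have rep2 : ∀ t, t ≠ w → t ≠ r → ∃ ρ, (ρ = z ∨ ρ = p ∨ ρ = r1 ∨ ρ = r2) ∧
      SameClass G w r t ρ := by
    intro t htw htr
    obtain ⟨n, hn, hre⟩ := rep_exists hconn hwr htw htr
    rcases hn with ⟨hwn, hnr⟩ | ⟨hrn, hnw⟩
    · rcases hNw n hwn with hc | hc | hc
      · exact ⟨p, Or.inr (Or.inl rfl), hc ▸ hre⟩
      · exact absurd hc hnr
      · exact ⟨z, Or.inl rfl, hc ▸ hre⟩
    · rcases hNr n hrn with hc | hc | hc
      · exact absurd hc hnw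
      · exact ⟨r1, Or.inr (Or.inr (Or.inl rfl)), hc ▸ hre⟩
      · exact ⟨r2, Or.inr (Or.inr (Or.inr rfl)), hc ▸ hre⟩
  -- rep non-equivalence
  have hinj1 : ∀ ρ σ, (ρ = z ∨ ρ = r ∨ ρ = p1 ∨ ρ = p2) →
      (σ = z ∨ σ = r ∨ σ = p1 ∨ σ = p2) → SameClass G w p ρ σ → ρ = σ := by
    rintro ρ σ (rfl | rfl | rfl | rfl) (rfl | rfl | rfl | rfl) hre <;>
      first
      | rfl
      | exact absurd hre (sep_pair hT hwz hwr hzr Set.subset_union_left)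
      | exact absurd hre.symm (sep_pair hT hwz hwr hzr Set.subset_union_left)
      | exact absurd hre (sep_cross hT hwp hwz hp1 hzp hp1w
          Set.subset_union_left Set.subset_union_right)
      | exact absurd hre.symm (sep_cross hT hwp hwz hp1 hzp hp1w
          Set.subset_union_left Set.subset_union_right)
      | exact absurd hre (sep_cross hT hwp hwz hp2 hzp hp2w
          Set.subset_union_left Set.subset_union_right)
      | exact absurd hre.symm (sep_cross hT hwp hwz hp2 hzp hp2w
          Set.subset_union_left Set.subset_union_right)
      | exact absurd hre (sep_cross hT hwp hwr hp1 (Ne.symm hpr) hp1w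
          Set.subset_union_left Set.subset_union_right)
      | exact absurd hre.symm (sep_cross hT hwp hwr hp1 (Ne.symm hpr) hp1w
          Set.subset_union_left Set.subset_union_right)
      | exact absurd hre (sep_cross hT hwp hwr hp2 (Ne.symm hpr) hp2w
          Set.subset_union_left Set.subset_union_right)
      | exact absurd hre.symm (sep_cross hT hwp hwr hp2 (Ne.symm hpr) hp2w
          Set.subset_union_left Set.subset_union_right)
      | exact absurd hre (sep_pair hT hp1 hp2 hp12 Set.subset_union_right)
      | exact absurd hre.symm (sep_pair hT hp1 hp2 hp12 Set.subset_union_right)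
  have hinj2 : ∀ ρ σ, (ρ = z ∨ ρ = p ∨ ρ = r1 ∨ ρ = r2) →
      (σ = z ∨ σ = p ∨ σ = r1 ∨ σ = r2) → SameClass G w r ρ σ → ρ = σ := by
    rintro ρ σ (rfl | rfl | rfl | rfl) (rfl | rfl | rfl | rfl) hre <;>
      first
      | rfl
      | exact absurd hre (sep_pair hT hwz hwp hzp Set.subset_union_left)
      | exact absurd hre.symm (sep_pair hT hwz hwp hzp Set.subset_union_left)
      | exact absurd hre (sep_cross hT hwr hwz hr1 hzr hr1w
          Set.subset_union_left Set.subset_union_right)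
      | exact absurd hre.symm (sep_cross hT hwr hwz hr1 hzr hr1w
          Set.subset_union_left Set.subset_union_right)
      | exact absurd hre (sep_cross hT hwr hwz hr2 hzr hr2w
          Set.subset_union_left Set.subset_union_right)
      | exact absurd hre.symm (sep_cross hT hwr hwz hr2 hzr hr2w
          Set.subset_union_left Set.subset_union_right)
      | exact absurd hre (sep_cross hT hwr hwp hr1 hpr hr1w
          Set.subset_union_left Set.subset_union_right)
      | exact absurd hre.symm (sep_cross hT hwr hwp hr1 hpr hr1w
          Set.subset_union_left Set.subset_union_right)
      | exact absurd hre (sep_cross hT hwr hwp hr2 hpr hr2w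
          Set.subset_union_left Set.subset_union_right)
      | exact absurd hre.symm (sep_cross hT hwr hwp hr2 hpr hr2w
          Set.subset_union_left Set.subset_union_right)
      | exact absurd hre (sep_pair hT hr1 hr2 hr12 Set.subset_union_right)
      | exact absurd hre.symm (sep_pair hT hr1 hr2 hr12 Set.subset_union_right)

  -- leaves are distinct from internal vertices
  have hne3 : ∀ t, G.degree t = 1 → t ≠ w ∧ t ≠ p ∧ t ≠ r := by
    intro t h
    refine ⟨?_, ?_, ?_⟩ <;> rintro rfl <;> omega
  have hmemi : ∀ t, (t = qi.a ∨ t = qi.b ∨ t = qi.c ∨ t = qi.d) → t ∈ qi.supp := by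
    rintro t (rfl | rfl | rfl | rfl) <;> simp [Q4.supp]
  have hmemj : ∀ t, (t = qj.a ∨ t = qj.b ∨ t = qj.c ∨ t = qj.d) → t ∈ qj.supp := by
    rintro t (rfl | rfl | rfl | rfl) <;> simp [Q4.supp]
  have hsuppi_mem : ∀ t, t ∈ qi.supp → (t = qi.a ∨ t = qi.b ∨ t = qi.c ∨ t = qi.d) := by
    intro t ht; simpa [Q4.supp] using ht
  have hsuppj_mem : ∀ t, t ∈ qj.supp → (t = qj.a ∨ t = qj.b ∨ t = qj.c ∨ t = qj.d) := by
    intro t ht; simpa [Q4.supp] using ht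
  have hdegi : ∀ t, (t = qi.a ∨ t = qi.b ∨ t = qi.c ∨ t = qi.d) → G.degree t = 1 :=
    fun t ht => hdeg t (Finset.mem_union_left _ (hmemi t ht))
  have hdegj : ∀ t, (t = qj.a ∨ t = qj.b ∨ t = qj.c ∨ t = qj.d) → G.degree t = 1 :=
    fun t ht => hdeg t (Finset.mem_union_right _ (hmemj t ht))
  have hxq : ∀ t, t ∈ qi.supp ∪ qj.supp → x ≠ t := fun t ht hx => hxs (hx ▸ ht)
  obtain ⟨hxw, hxp, hxr⟩ := hne3 x hlx
  obtain ⟨ρa, hρam, hρa⟩ := rep1 qi.a (hne3 _ (hdegi _ (Or.inl rfl))).1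
    (hne3 _ (hdegi _ (Or.inl rfl))).2.1
  obtain ⟨ρb, hρbm, hρb⟩ := rep1 qi.b (hne3 _ (hdegi _ (Or.inr (Or.inl rfl)))).1
    (hne3 _ (hdegi _ (Or.inr (Or.inl rfl)))).2.1
  obtain ⟨ρc, hρcm, hρc⟩ := rep1 qi.c (hne3 _ (hdegi _ (Or.inr (Or.inr (Or.inl rfl))))).1
    (hne3 _ (hdegi _ (Or.inr (Or.inr (Or.inl rfl))))).2.1
  obtain ⟨ρd, hρdm, hρd⟩ := rep1 qi.d (hne3 _ (hdegi _ (Or.inr (Or.inr (Or.inr rfl))))).1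
    (hne3 _ (hdegi _ (Or.inr (Or.inr (Or.inr rfl))))).2.1
  obtain ⟨ρx, hρxm, hρx⟩ := rep1 x hxw hxp
  obtain ⟨σa, hσam, hσa⟩ := rep2 qj.a (hne3 _ (hdegj _ (Or.inl rfl))).1
    (hne3 _ (hdegj _ (Or.inl rfl))).2.2
  obtain ⟨σb, hσbm, hσb⟩ := rep2 qj.b (hne3 _ (hdegj _ (Or.inr (Or.inl rfl)))).1
    (hne3 _ (hdegj _ (Or.inr (Or.inl rfl)))).2.2
  obtain ⟨σc, hσcm, hσc⟩ := rep2 qj.c (hne3 _ (hdegj _ (Or.inr (Or.inr (Or.inl rfl))))).1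
    (hne3 _ (hdegj _ (Or.inr (Or.inr (Or.inl rfl))))).2.2
  obtain ⟨σd, hσdm, hσd⟩ := rep2 qj.d (hne3 _ (hdegj _ (Or.inr (Or.inr (Or.inr rfl))))).1
    (hne3 _ (hdegj _ (Or.inr (Or.inr (Or.inr rfl))))).2.2
  obtain ⟨σx, hσxm, hσx⟩ := rep2 x hxw hxr
  -- easy non-equivalences from Separates
  have hab0 := hdi.1.2.1
  have hcd0 := hdi.1.2.2.1
  have hnac := hdi.1.2.2.2
  have hab0j := hdj.1.2.1
  have hcd0j := hdj.1.2.2.1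
  have hnacj := hdj.1.2.2.2
  have hmono1 : ∀ {s t : V}, SameClass G w p s t →
      (G.deleteEdges {s(w, p)}).Reachable s t :=
    fun h => Reachable.mono (SimpleGraph.deleteEdges_anti (Set.singleton_subset_iff.mpr
      (Or.inl (G.mk'_mem_incidenceSet_iff.mpr ⟨hwp, Or.inl rfl⟩)))) h
  have hmono2 : ∀ {s t : V}, SameClass G w r s t →
      (G.deleteEdges {s(w, r)}).Reachable s t :=
    fun h => Reachable.mono (SimpleGraph.deleteEdges_anti (Set.singleton_subset_iff.mpr
      (Or.inl (G.mk'_mem_incidenceSet_iff.mpr ⟨hwr, Or.inl rfl⟩)))) h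
  have hAC : ¬ SameClass G w p qi.a qi.c := fun h => hnac (hmono1 h)
  have hAD : ¬ SameClass G w p qi.a qi.d := fun h => hnac ((hmono1 h).trans hcd0.symm)
  have hBC : ¬ SameClass G w p qi.b qi.c := fun h => hnac (hab0.trans (hmono1 h))
  have hBD : ¬ SameClass G w p qi.b qi.d :=
    fun h => hnac (hab0.trans ((hmono1 h).trans hcd0.symm))
  have hACj : ¬ SameClass G w r qj.a qj.c := fun h => hnacj (hmono2 h)
  have hADj : ¬ SameClass G w r qj.a qj.d := fun h => hnacj ((hmono2 h).trans hcd0j.symm)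
  have hBCj : ¬ SameClass G w r qj.b qj.c := fun h => hnacj (hab0j.trans (hmono2 h))
  have hBDj : ¬ SameClass G w r qj.b qj.d :=
    fun h => hnacj (hab0j.trans ((hmono2 h).trans hcd0j.symm))
  -- hard pairs
  have hAB : ¬ SameClass G w p qi.a qi.b := by
    intro h
    have hcane : ρc ≠ ρa := fun hE => hAC (hρa.trans (hE ▸ hρc).symm)
    have hdane : ρd ≠ ρa := fun hE => hAD (hρa.trans (hE ▸ hρd).symm)
    exact hard_pair hT hwp hwr hwz hp1 hp2 hzr hzp (Ne.symm hpr) hp1w hp2w hp12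
      (Ne.symm hp1z) (Ne.symm hp2z) (Ne.symm hp1r) (Ne.symm hp2r) hdi
      hρam hρcm hρdm hcane hdane hρa (h.symm.trans hρa) hρc hρd
  have hCD' : ¬ SameClass G w p qi.c qi.d := by
    intro h
    have hane : ρa ≠ ρc := fun hE => hAC ((hE ▸ hρa).trans hρc.symm)
    have hbne : ρb ≠ ρc := fun hE => hBC ((hE ▸ hρb).trans hρc.symm)
    exact hard_pair hT hwp hwr hwz hp1 hp2 hzr hzp (Ne.symm hpr) hp1w hp2w hp12
      (Ne.symm hp1z) (Ne.symm hp2z) (Ne.symm hp1r) (Ne.symm hp2r) (dist_swap hdi)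
      hρcm hρam hρbm hane hbne hρc (h.symm.trans hρc) hρa hρb
  have hABj : ¬ SameClass G w r qj.a qj.b := by
    intro h
    have hcane : σc ≠ σa := fun hE => hACj (hσa.trans (hE ▸ hσc).symm)
    have hdane : σd ≠ σa := fun hE => hADj (hσa.trans (hE ▸ hσd).symm)
    exact hard_pair hT hwr hwp hwz hr1 hr2 hzp hzr hpr hr1w hr2w hr12
      (Ne.symm hr1z) (Ne.symm hr2z) (Ne.symm hr1p) (Ne.symm hr2p) hdj
      hσam hσcm hσdm hcane hdane hσa (h.symm.trans hσa) hσc hσd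
  have hCDj' : ¬ SameClass G w r qj.c qj.d := by
    intro h
    have hane : σa ≠ σc := fun hE => hACj ((hE ▸ hσa).trans hσc.symm)
    have hbne : σb ≠ σc := fun hE => hBCj ((hE ▸ hσb).trans hσc.symm)
    exact hard_pair hT hwr hwp hwz hr1 hr2 hzp hzr hpr hr1w hr2w hr12
      (Ne.symm hr1z) (Ne.symm hr2z) (Ne.symm hr1p) (Ne.symm hr2p) (dist_swap hdj)
      hσcm hσam hσbm hane hbne hσc (h.symm.trans hσc) hσa hσb
  -- coordinate-level injectivity
  have hcoord1 : ∀ t1, (t1 = qi.a ∨ t1 = qi.b ∨ t1 = qi.c ∨ t1 = qi.d) →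
      ∀ t2, (t2 = qi.a ∨ t2 = qi.b ∨ t2 = qi.c ∨ t2 = qi.d) →
      SameClass G w p t1 t2 → t1 = t2 := by
    rintro t1 (rfl | rfl | rfl | rfl) t2 (rfl | rfl | rfl | rfl) h <;>
      first
      | rfl
      | exact absurd h hAB | exact absurd h.symm hAB
      | exact absurd h hAC | exact absurd h.symm hAC
      | exact absurd h hAD | exact absurd h.symm hAD
      | exact absurd h hBC | exact absurd h.symm hBC
      | exact absurd h hBD | exact absurd h.symm hBD
      | exact absurd h hCD' | exact absurd h.symm hCD'
  have hcoord2 : ∀ t1, (t1 = qj.a ∨ t1 = qj.b ∨ t1 = qj.c ∨ t1 = qj.d) →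
      ∀ t2, (t2 = qj.a ∨ t2 = qj.b ∨ t2 = qj.c ∨ t2 = qj.d) →
      SameClass G w r t1 t2 → t1 = t2 := by
    rintro t1 (rfl | rfl | rfl | rfl) t2 (rfl | rfl | rfl | rfl) h <;>
      first
      | rfl
      | exact absurd h hABj | exact absurd h.symm hABj
      | exact absurd h hACj | exact absurd h.symm hACj
      | exact absurd h hADj | exact absurd h.symm hADj
      | exact absurd h hBCj | exact absurd h.symm hBCj
      | exact absurd h hBDj | exact absurd h.symm hBDj
      | exact absurd h hCDj' | exact absurd h.symm hCDj'
  -- distinct reps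
  have hρab : ρa ≠ ρb := fun hE => hAB (hρa.trans (hE.symm ▸ hρb).symm)
  have hρac : ρa ≠ ρc := fun hE => hAC (hρa.trans (hE.symm ▸ hρc).symm)
  have hρad : ρa ≠ ρd := fun hE => hAD (hρa.trans (hE.symm ▸ hρd).symm)
  have hρbc : ρb ≠ ρc := fun hE => hBC (hρb.trans (hE.symm ▸ hρc).symm)
  have hρbd : ρb ≠ ρd := fun hE => hBD (hρb.trans (hE.symm ▸ hρd).symm)
  have hρcd : ρc ≠ ρd := fun hE => hCD' (hρc.trans (hE.symm ▸ hρd).symm)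
  have hσab : σa ≠ σb := fun hE => hABj (hσa.trans (hE.symm ▸ hσb).symm)
  have hσac : σa ≠ σc := fun hE => hACj (hσa.trans (hE.symm ▸ hσc).symm)
  have hσad : σa ≠ σd := fun hE => hADj (hσa.trans (hE.symm ▸ hσd).symm)
  have hσbc : σb ≠ σc := fun hE => hBCj (hσb.trans (hE.symm ▸ hσc).symm)
  have hσbd : σb ≠ σd := fun hE => hBDj (hσb.trans (hE.symm ▸ hσd).symm)
  have hσcd : σc ≠ σd := fun hE => hCDj' (hσc.trans (hE.symm ▸ hσd).symm)
  -- surjectivity of reps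
  have hbound4 : ∀ α β γ δ : V, ({α, β, γ, δ} : Finset V).card ≤ 4 := by
    intro α β γ δ
    refine le_trans (Finset.card_insert_le _ _) (Nat.succ_le_succ ?_)
    refine le_trans (Finset.card_insert_le _ _) (Nat.succ_le_succ ?_)
    exact le_trans (Finset.card_insert_le _ _) (by simp)
  have hsurj1 : ∀ σ0, (σ0 = z ∨ σ0 = r ∨ σ0 = p1 ∨ σ0 = p2) →
      σ0 = ρa ∨ σ0 = ρb ∨ σ0 = ρc ∨ σ0 = ρd := by
    intro σ0 hσ0
    by_contra hcon
    push_neg at hcon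
    obtain ⟨n1, n2, n3, n4⟩ := hcon
    have hsub : ({σ0, ρa, ρb, ρc, ρd} : Finset V) ⊆ {z, r, p1, p2} := by
      intro t ht
      simp only [Finset.mem_insert, Finset.mem_singleton] at ht ⊢
      rcases ht with rfl | rfl | rfl | rfl | rfl
      exacts [hσ0, hρam, hρbm, hρcm, hρdm]
    have hc5 : ({σ0, ρa, ρb, ρc, ρd} : Finset V).card = 5 := by
      rw [Finset.card_insert_of_notMem (by simp [n1, n2, n3, n4]),
        Finset.card_insert_of_notMem (by simp [hρab, hρac, hρad]),
        Finset.card_insert_of_notMem (by simp [hρbc, hρbd]),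
        Finset.card_insert_of_notMem (by simp [hρcd]), Finset.card_singleton]
    have hle := Finset.card_le_card hsub
    have h4 := hbound4 z r p1 p2
    omega
  have hsurj2 : ∀ σ0, (σ0 = z ∨ σ0 = p ∨ σ0 = r1 ∨ σ0 = r2) →
      σ0 = σa ∨ σ0 = σb ∨ σ0 = σc ∨ σ0 = σd := by
    intro σ0 hσ0
    by_contra hcon
    push_neg at hcon
    obtain ⟨n1, n2, n3, n4⟩ := hcon
    have hsub : ({σ0, σa, σb, σc, σd} : Finset V) ⊆ {z, p, r1, r2} := by
      intro t ht
      simp only [Finset.mem_insert, Finset.mem_singleton] at ht ⊢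
      rcases ht with rfl | rfl | rfl | rfl | rfl
      exacts [hσ0, hσam, hσbm, hσcm, hσdm]
    have hc5 : ({σ0, σa, σb, σc, σd} : Finset V).card = 5 := by
      rw [Finset.card_insert_of_notMem (by simp [n1, n2, n3, n4]),
        Finset.card_insert_of_notMem (by simp [hσab, hσac, hσad]),
        Finset.card_insert_of_notMem (by simp [hσbc, hσbd]),
        Finset.card_insert_of_notMem (by simp [hσcd]), Finset.card_singleton]
    have hle := Finset.card_le_card hsub
    have h4 := hbound4 z p r1 r2
    omega
  -- the replaced coordinates
  obtain ⟨yi, hyim, hyirep⟩ : ∃ y, (y = qi.a ∨ y = qi.b ∨ y = qi.c ∨ y = qi.d) ∧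
      SameClass G w p y ρx := by
    rcases hsurj1 ρx hρxm with h | h | h | h
    · exact ⟨qi.a, Or.inl rfl, h.symm ▸ hρa⟩
    · exact ⟨qi.b, Or.inr (Or.inl rfl), h.symm ▸ hρb⟩
    · exact ⟨qi.c, Or.inr (Or.inr (Or.inl rfl)), h.symm ▸ hρc⟩
    · exact ⟨qi.d, Or.inr (Or.inr (Or.inr rfl)), h.symm ▸ hρd⟩
  have hxyi : SameClass G w p x yi := hρx.trans hyirep.symm
  have huniq1 : ∀ t, (t = qi.a ∨ t = qi.b ∨ t = qi.c ∨ t = qi.d) →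
      SameClass G w p x t → t = yi :=
    fun t htm hxt => hcoord1 t htm yi hyim (hxt.symm.trans hxyi)
  have hsuppiE := subst_supp hci hyim hxyi huniq1
  obtain ⟨yj, hyjm, hyjrep⟩ : ∃ y, (y = qj.a ∨ y = qj.b ∨ y = qj.c ∨ y = qj.d) ∧
      SameClass G w r y σx := by
    rcases hsurj2 σx hσxm with h | h | h | h
    · exact ⟨qj.a, Or.inl rfl, h.symm ▸ hσa⟩
    · exact ⟨qj.b, Or.inr (Or.inl rfl), h.symm ▸ hσb⟩
    · exact ⟨qj.c, Or.inr (Or.inr (Or.inl rfl)), h.symm ▸ hσc⟩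
    · exact ⟨qj.d, Or.inr (Or.inr (Or.inr rfl)), h.symm ▸ hσd⟩
  have hxyj : SameClass G w r x yj := hσx.trans hyjrep.symm
  have huniq2 : ∀ t, (t = qj.a ∨ t = qj.b ∨ t = qj.c ∨ t = qj.d) →
      SameClass G w r x t → t = yj :=
    fun t htm hxt => hcoord2 t htm yj hyjm (hxt.symm.trans hxyj)
  have hsuppjE := subst_supp hcj hyjm hxyj huniq2
  -- coords of qj in the classes of r1 and r2
  obtain ⟨C, hCm, hCrep⟩ : ∃ y, (y = qj.a ∨ y = qj.b ∨ y = qj.c ∨ y = qj.d) ∧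
      SameClass G w r y r1 := by
    rcases hsurj2 r1 (Or.inr (Or.inr (Or.inl rfl))) with h | h | h | h
    · exact ⟨qj.a, Or.inl rfl, h.symm ▸ hσa⟩
    · exact ⟨qj.b, Or.inr (Or.inl rfl), h.symm ▸ hσb⟩
    · exact ⟨qj.c, Or.inr (Or.inr (Or.inl rfl)), h.symm ▸ hσc⟩
    · exact ⟨qj.d, Or.inr (Or.inr (Or.inr rfl)), h.symm ▸ hσd⟩
  obtain ⟨D, hDm, hDrep⟩ : ∃ y, (y = qj.a ∨ y = qj.b ∨ y = qj.c ∨ y = qj.d) ∧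
      SameClass G w r y r2 := by
    rcases hsurj2 r2 (Or.inr (Or.inr (Or.inr rfl))) with h | h | h | h
    · exact ⟨qj.a, Or.inl rfl, h.symm ▸ hσa⟩
    · exact ⟨qj.b, Or.inr (Or.inl rfl), h.symm ▸ hσb⟩
    · exact ⟨qj.c, Or.inr (Or.inr (Or.inl rfl)), h.symm ▸ hσc⟩
    · exact ⟨qj.d, Or.inr (Or.inr (Or.inr rfl)), h.symm ▸ hσd⟩
  have hCDne : C ≠ D := by
    intro hE
    exact hr12 (hinj2 r1 r2 (Or.inr (Or.inr (Or.inl rfl))) (Or.inr (Or.inr (Or.inr rfl)))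
      (hCrep.symm.trans (show SameClass G w r C r2 by rw [hE]; exact hDrep)))
  -- cross-class transfer
  have hcrossr : ∀ t, G.degree t = 1 →
      (SameClass G w r t r1 ∨ SameClass G w r t r2) → SameClass G w p t r := by
    intro t h1 hre
    obtain ⟨htw, htp, htr⟩ := hne3 t h1
    rcases hre with hre | hre
    · exact cross_p hT hwr hwp hr1 hpr hr1w hr1p htw htr htp hre
    · exact cross_p hT hwr hwp hr2 hpr hr2w hr2p htw htr htp hre
  have hcrossz21 : ∀ t, G.degree t = 1 → SameClass G w r t z → SameClass G w p t z := by
    intro t h1 hre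
    obtain ⟨htw, htp, htr⟩ := hne3 t h1
    exact cross_z hT hwr hwp hwz hzr hzp htw htr htp hre
  have hcrossp21 : ∀ t, G.degree t = 1 → SameClass G w r t p →
      SameClass G w p t p1 ∨ SameClass G w p t p2 := by
    intro t h1 hre
    obtain ⟨htw, htp, htr⟩ := hne3 t h1
    obtain ⟨s₀, hs0, hre'⟩ := cross_p' hT hwp hwr (Ne.symm hpr) hNp htw htp htr hre
    rcases hs0 with rfl | rfl
    · exact Or.inl hre'
    · exact Or.inr hre'
  -- main case split on the class of x with respect to the second edge
  have hfinish : ∀ (hne1' : r1 ≠ σx) (hne2' : r2 ≠ σx), ρx ≠ r →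
      ∃ E, E ∈ (subst G w r qj x).supp ∧ E ∉ (subst G w p qi x).supp := by
    intro hne1' hne2' hρxnr
    have hnotboth : C ∉ (subst G w p qi x).supp ∨ D ∉ (subst G w p qi x).supp := by
      by_contra hcon
      push_neg at hcon
      obtain ⟨hCin, hDin⟩ := hcon
      have hget : ∀ t, (SameClass G w r t r1 ∨ SameClass G w r t r2) → G.degree t = 1 →
          t ∈ (subst G w p qi x).supp →
          (t = qi.a ∨ t = qi.b ∨ t = qi.c ∨ t = qi.d) ∧ SameClass G w p t r := by
        intro t hrept hdeg1 hmem
        rw [hsuppiE] at hmem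
        rcases Finset.mem_insert.mp hmem with hE | hE
        · exfalso
          rcases hrept with hrept | hrept
          · exact hne1' (hinj2 r1 σx (Or.inr (Or.inr (Or.inl rfl))) hσxm
              (((show SameClass G w r x r1 by rw [← hE]; exact hrept)).symm.trans hσx))
          · exact hne2' (hinj2 r2 σx (Or.inr (Or.inr (Or.inr rfl))) hσxm
              (((show SameClass G w r x r2 by rw [← hE]; exact hrept)).symm.trans hσx))
        · exact ⟨hsuppi_mem t (Finset.mem_erase.mp hE).2, hcrossr t hdeg1 hrept⟩
      obtain ⟨hCc, hCr⟩ := hget C (Or.inl hCrep) (hdegj C hCm) hCin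
      obtain ⟨hDc, hDr⟩ := hget D (Or.inr hDrep) (hdegj D hDm) hDin
      exact hCDne (hcoord1 C hCc D hDc (hCr.trans hDr.symm))
    rcases hnotboth with hE | hE
    · refine ⟨C, ?_, hE⟩
      rw [hsuppjE]
      refine Finset.mem_insert_of_mem (Finset.mem_erase.mpr ⟨?_, hmemj C hCm⟩)
      intro hEq
      exact hne1' (hinj2 r1 σx (Or.inr (Or.inr (Or.inl rfl))) hσxm
        (hCrep.symm.trans (show SameClass G w r C σx by rw [hEq]; exact hyjrep)))
    · refine ⟨D, ?_, hE⟩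
      rw [hsuppjE]
      refine Finset.mem_insert_of_mem (Finset.mem_erase.mpr ⟨?_, hmemj D hDm⟩)
      intro hEq
      exact hne2' (hinj2 r2 σx (Or.inr (Or.inr (Or.inr rfl))) hσxm
        (hDrep.symm.trans (show SameClass G w r D σx by rw [hEq]; exact hyjrep)))
  rcases hσxm with hσxz | hσxp | hσx1 | hσx2
  · -- σx = z
    refine hfinish (by rw [hσxz]; exact hr1z) (by rw [hσxz]; exact hr2z) ?_
    intro hE
    have hxz2 : SameClass G w r x z := hσxz ▸ hσx
    have hxz1 : SameClass G w p x z := hcrossz21 x hlx hxz2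
    exact hzr (hinj1 z r (Or.inl rfl) (Or.inr (Or.inl rfl))
      (hxz1.symm.trans (hE ▸ hρx)))
  · -- σx = p
    refine hfinish (by rw [hσxp]; exact hr1p) (by rw [hσxp]; exact hr2p) ?_
    intro hE
    have hxp2 : SameClass G w r x p := hσxp ▸ hσx
    rcases hcrossp21 x hlx hxp2 with h | h
    · exact hp1r (hinj1 p1 r (Or.inr (Or.inr (Or.inl rfl))) (Or.inr (Or.inl rfl))
        (h.symm.trans (hE ▸ hρx)))
    · exact hp2r (hinj1 p2 r (Or.inr (Or.inr (Or.inr rfl))) (Or.inr (Or.inl rfl))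
        (h.symm.trans (hE ▸ hρx)))
  · -- σx = r1
    have hxr1 : SameClass G w r x r1 := hσx1 ▸ hσx
    have hxrr : SameClass G w p x r := hcrossr x hlx (Or.inl hxr1)
    have hρxr : ρx = r := hinj1 ρx r hρxm (Or.inr (Or.inl rfl)) (hρx.symm.trans hxrr)
    refine ⟨D, ?_, ?_⟩
    · rw [hsuppjE]
      refine Finset.mem_insert_of_mem (Finset.mem_erase.mpr ⟨?_, hmemj D hDm⟩)
      intro hEq
      refine hr12.symm (hinj2 r2 r1 (Or.inr (Or.inr (Or.inr rfl)))
        (Or.inr (Or.inr (Or.inl rfl))) ?_)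
      refine hDrep.symm.trans ?_
      rw [hEq, ← hσx1]
      exact hyjrep
    · rw [hsuppiE]
      intro hmem
      rcases Finset.mem_insert.mp hmem with hEq | hEq
      · exact hxq D (Finset.mem_union_right _ (hmemj D hDm)) hEq.symm
      · obtain ⟨hDyi, hDsupp⟩ := Finset.mem_erase.mp hEq
        have hDc := hsuppi_mem D hDsupp
        have hDr : SameClass G w p D r := hcrossr D (hdegj D hDm) (Or.inr hDrep)
        have hyir : SameClass G w p yi r := by rw [← hρxr]; exact hyirep
        exact hDyi (hcoord1 D hDc yi hyim (hDr.trans hyir.symm))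
  · -- σx = r2
    have hxr2 : SameClass G w r x r2 := hσx2 ▸ hσx
    have hxrr : SameClass G w p x r := hcrossr x hlx (Or.inr hxr2)
    have hρxr : ρx = r := hinj1 ρx r hρxm (Or.inr (Or.inl rfl)) (hρx.symm.trans hxrr)
    refine ⟨C, ?_, ?_⟩
    · rw [hsuppjE]
      refine Finset.mem_insert_of_mem (Finset.mem_erase.mpr ⟨?_, hmemj C hCm⟩)
      intro hEq
      refine hr12 (hinj2 r1 r2 (Or.inr (Or.inr (Or.inl rfl)))
        (Or.inr (Or.inr (Or.inr rfl))) ?_)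
      refine hCrep.symm.trans ?_
      rw [hEq, ← hσx2]
      exact hyjrep
    · rw [hsuppiE]
      intro hmem
      rcases Finset.mem_insert.mp hmem with hEq | hEq
      · exact hxq C (Finset.mem_union_right _ (hmemj C hCm)) hEq.symm
      · obtain ⟨hCyi, hCsupp⟩ := Finset.mem_erase.mp hEq
        have hCc := hsuppi_mem C hCsupp
        have hCr : SameClass G w p C r := hcrossr C (hdegj C hCm) (Or.inl hCrep)
        have hyir : SameClass G w p yi r := by rw [← hρxr]; exact hyirep
        exact hCyi (hcoord1 C hCc yi hyim (hCr.trans hyir.symm))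

lemma final (hG : IsBinaryTree G) {w p r : V} (qi qj : Q4 V)
    (hwp : G.Adj w p) (hwr : G.Adj w r) (hpr : p ≠ r)
    (hdegw : G.degree w = 3) (hdegp : G.degree p = 3) (hdegr : G.degree r = 3)
    (hdi : Distinguishes G s(w, p) qi.a qi.b qi.c qi.d)
    (hdj : Distinguishes G s(w, r) qj.a qj.b qj.c qj.d)
    (hci : qi.supp.card = 4) (hcj : qj.supp.card = 4)
    (hdeg : ∀ t ∈ qi.supp ∪ qj.supp, G.degree t = 1)
    (x : V) (hlx : G.degree x = 1) (hxs : x ∉ qi.supp ∪ qj.supp) :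
    (subst G w p qi x).toSym ≠ (subst G w r qj x).toSym ∧
    ((subst G w p qi x).supp ∪ (subst G w r qj x).supp).card ≠ 4 := by
  obtain ⟨E, hEj, hEi⟩ := core hG.1 qi qj hwp hwr hpr hdegw hdegp hdegr hdi hdj
    hci hcj hdeg x hlx hxs
  have hxi : x ∉ qi.supp := fun h => hxs (Finset.mem_union_left _ h)
  have hci4 : (subst G w p qi x).supp.card = 4 := subst_card hci hxi
  constructor
  · intro hts
    exact hEi (toSym_supp hts ▸ hEj)
  · intro hcard
    have hsub : (subst G w p qi x).supp ⊆
        (subst G w p qi x).supp ∪ (subst G w r qj x).supp := Finset.subset_union_left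
    have heq := Finset.eq_of_subset_of_card_le hsub (by rw [hcard, hci4])
    exact hEi (heq ▸ Finset.mem_union_right _ hEj)

end QTAux

open QTAux

/-- If `qᵢ`, `qⱼ` are linked quartet trees distinguishing distinct adjacent interior edges,
then for any leaf `x` outside their combined support `qᵢ(x) ≠ qⱼ(x)`; equivalently,
`|supp(qᵢ(x)) ∪ supp(qⱼ(x))| ≠ 4`. -/
theorem stmt_11 {V : Type} [Fintype V] [DecidableEq V] (G : SimpleGraph V) [DecidableRel G.Adj]
    (hG : IsBinaryTree G) (u₁ v₁ u₂ v₂ : V) (qi qj : Q4 V)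
    (hei : InteriorEdge G s(u₁, v₁)) (hej : InteriorEdge G s(u₂, v₂))
    (hne : s(u₁, v₁) ≠ s(u₂, v₂)) (hadj : ∃ w, w ∈ s(u₁, v₁) ∧ w ∈ s(u₂, v₂))
    (hdi : Distinguishes G s(u₁, v₁) qi.a qi.b qi.c qi.d)
    (hdj : Distinguishes G s(u₂, v₂) qj.a qj.b qj.c qj.d)
    (hci : qi.supp.card = 4) (hcj : qj.supp.card = 4)
    (hsub : ∀ t ∈ qi.supp ∪ qj.supp, G.degree t = 1)
    (hlink : (qi.supp ∪ qj.supp).card = 5)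
    (x : V) (hlx : G.degree x = 1) (hxs : x ∉ qi.supp ∪ qj.supp) :
    (subst G u₁ v₁ qi x).toSym ≠ (subst G u₂ v₂ qj x).toSym ∧
    ((subst G u₁ v₁ qi x).supp ∪ (subst G u₂ v₂ qj x).supp).card ≠ 4 := by
  obtain ⟨w, hw1, hw2⟩ := hadj
  rw [Sym2.mem_iff] at hw1 hw2
  have hadj1 : G.Adj u₁ v₁ := G.mem_edgeSet.mp hei.1
  have hadj2 : G.Adj u₂ v₂ := G.mem_edgeSet.mp hej.1
  have hd1 : G.degree u₁ = 3 := hei.2 u₁ (Sym2.mem_mk_left _ _)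
  have hd1' : G.degree v₁ = 3 := hei.2 v₁ (Sym2.mem_mk_right _ _)
  have hd2 : G.degree u₂ = 3 := hej.2 u₂ (Sym2.mem_mk_left _ _)
  have hd2' : G.degree v₂ = 3 := hej.2 v₂ (Sym2.mem_mk_right _ _)
  rcases hw1 with rfl | rfl
  · -- u₁ is the shared vertex w
    rcases hw2 with rfl | h2
    · have hpr : v₁ ≠ v₂ := fun h => hne (by rw [h])
      exact final hG qi qj hadj1 hadj2 hpr hd1 hd1' hd2' hdi hdj hci hcj hsub x hlx hxs
    · rw [← h2] at hdj hne hadj2 hd2'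
      rw [show s(u₂, w) = s(w, u₂) from Sym2.eq_swap] at hdj hne
      have hpr : v₁ ≠ u₂ := fun h => hne (by rw [h])
      rw [show subst G u₂ v₂ qj x = subst G w u₂ qj x by rw [← h2, subst_comm]]
      exact final hG qi qj hadj1 hadj2.symm hpr hd1 hd1' hd2 hdi hdj hci hcj hsub x hlx hxs
  · -- v₁ is the shared vertex w
    rw [show s(u₁, w) = s(w, u₁) from Sym2.eq_swap] at hdi hne
    rw [subst_comm G u₁ w]
    rcases hw2 with rfl | h2
    · have hpr : u₁ ≠ v₂ := fun h => hne (by rw [h])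
      exact final hG qi qj hadj1.symm hadj2 hpr hd1' hd1 hd2' hdi hdj hci hcj hsub x hlx hxs
    · rw [← h2] at hdj hne hadj2 hd2'
      rw [show s(u₂, w) = s(w, u₂) from Sym2.eq_swap] at hdj hne
      have hpr : u₁ ≠ u₂ := fun h => hne (by rw [h])
      rw [show subst G u₂ v₂ qj x = subst G w u₂ qj x by rw [← h2, subst_comm]]
      exact final hG qi qj hadj1.symm hadj2.symm hpr hd1' hd1 hd2 hdi hdj hci hcj hsub x hlx hxs
end
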